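/- arXiv:1608.06059 — 9 statements merged into one kernel-verified Lean document; each statement's English description precedes it below -/
import Mathlib

section
/- For every integer i, the integer n′_i is not divisible by p. -/
/-!
Modulo `p`, the number `n i` reduces to its last digit `a (i + f) = a i`. Hence `n' i` is
congruent either to `a (i - 1) ∈ [1, p - 1]`, or to `a (j - 1) + 1 - p^f ≡ a (j - 1) - (p - 1)`
with `a (j - 1) ∈ [1, p]` and `a (j - 1) ≠ p - 1`; in both cases the residue is a number of
absolute value less than `p` that is not zero.
-/

theorem Int.sum_range_mul_pow_modEq_last {f : ℕ} (hf : 1 ≤ f) (b : ℕ → ℤ) (q : ℤ) :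
    ∑ j ∈ Finset.range f, b j * q ^ (f - 1 - j) ≡ b (f - 1) [ZMOD q] := by
  obtain ⟨m, rfl⟩ : ∃ m, f = m + 1 := ⟨f - 1, by omega⟩
  have h_init : ∑ j ∈ Finset.range m, b j * q ^ (m - j) ≡ 0 [ZMOD q] :=
    Int.modEq_zero_iff_dvd.2 <| Finset.dvd_sum fun j hj =>
      (dvd_pow_self q (by simp at hj; omega)).mul_left _
  simpa [Finset.sum_range_succ] using h_init.add_right (b m)

theorem stmt_0_general (p f : ℕ) (hp : p.Prime) (hf : 1 ≤ f)
    (a : ℤ → ℤ) (ha_per : ∀ i : ℤ, a (i + f) = a i)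
    (ha_lb : ∀ i : ℤ, 1 ≤ a i) (ha_ub : ∀ i : ℤ, a i ≤ p)
    (n : ℤ → ℤ)
    (hn : ∀ i : ℤ, n i = ∑ j ∈ Finset.range f, a (i + j + 1) * (p : ℤ) ^ (f - 1 - j))
    (n' t : ℤ → ℤ)
    (hn't₁ : ∀ i : ℤ, a (i - 1) ≠ p → n' i = n (i - 1) ∧ t i = i - 1)
    (hn't₂ : ∀ i : ℤ, a (i - 1) = p → ∃ j : ℤ, j < i ∧ a (j - 1) ≠ p - 1 ∧
      (∀ k : ℤ, j < k → k < i → a (k - 1) = p - 1) ∧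
      n' i = n (j - 1) - ((p : ℤ) ^ f - 1) ∧ t i = j - 1) :
    ∀ i : ℤ, ¬ (p : ℤ) ∣ n' i := by
  have hp2 : (2 : ℤ) ≤ p := by exact_mod_cast hp.two_le
  have hn_modEq (i : ℤ) : n i ≡ a i [ZMOD p] := by
    have h_last : a (i + (f - 1 : ℕ) + 1) = a i := by
      rw [← ha_per i]; congr 1; push_cast [hf]; ring
    simpa only [hn, h_last] using
      Int.sum_range_mul_pow_modEq_last hf (fun j => a (i + j + 1)) p
  intro i hdvd
  by_cases h : a (i - 1) = p
  · obtain ⟨j, -, hja, -, hn'i, -⟩ := hn't₂ i h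
    have h_pow : (p : ℤ) ^ f - 1 ≡ p - 1 [ZMOD p] :=
      Int.modEq_iff_dvd.2 (by simpa using dvd_pow_self (p : ℤ) (by omega : f ≠ 0))
    rw [hn'i, ((hn_modEq (j - 1)).sub h_pow).dvd_iff] at hdvd
    have h_abs : |a (j - 1) - (p - 1)| < p :=
      abs_lt.2 ⟨by linarith [ha_lb (j - 1)], by linarith [ha_ub (j - 1)]⟩
    exact hja (sub_eq_zero.1 (Int.eq_zero_of_abs_lt_dvd hdvd h_abs))
  · rw [(hn't₁ i h).1, (hn_modEq (i - 1)).dvd_iff] at hdvd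
    have h_abs : |a (i - 1)| < p :=
      abs_lt.2 ⟨by linarith [ha_lb (i - 1)], lt_of_le_of_ne (ha_ub (i - 1)) h⟩
    linarith [Int.eq_zero_of_abs_lt_dvd hdvd h_abs, ha_lb (i - 1)]

/-- Lemma 3.8 ("n'_i is a unit"): for every integer `i`, the integer `n'_i` is not
divisible by `p`. Here `n'` and `t` are characterized by: if `a (i-1) ≠ p` then
`n' i = n (i-1)` and `t i = i - 1`; if `a (i-1) = p` then, `j` being the greatest
integer less than `i` with `a (j-1) ≠ p - 1`, we have `n' i = n (j-1) - (p^f - 1)`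
and `t i = j - 1`. -/
theorem stmt_0 (p f : ℕ) (hp : p.Prime) (hf : 1 ≤ f)
    (a : ℤ → ℤ) (ha_per : ∀ i : ℤ, a (i + f) = a i)
    (ha_lb : ∀ i : ℤ, 1 ≤ a i) (ha_ub : ∀ i : ℤ, a i ≤ p)
    (ha_ne : ∃ i : ℤ, a i ≠ p)
    (n : ℤ → ℤ)
    (hn : ∀ i : ℤ, n i = ∑ j ∈ Finset.range f, a (i + j + 1) * (p : ℤ) ^ (f - 1 - j))
    (n' t : ℤ → ℤ)
    (hn't₁ : ∀ i : ℤ, a (i - 1) ≠ p → n' i = n (i - 1) ∧ t i = i - 1)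
    (hn't₂ : ∀ i : ℤ, a (i - 1) = p → ∃ j : ℤ, j < i ∧ a (j - 1) ≠ p - 1 ∧
      (∀ k : ℤ, j < k → k < i → a (k - 1) = p - 1) ∧
      n' i = n (j - 1) - ((p : ℤ) ^ f - 1) ∧ t i = j - 1) :
    ∀ i : ℤ, ¬ (p : ℤ) ∣ n' i :=
  stmt_0_general p f hp hf a ha_per ha_lb ha_ub n hn n' t hn't₁ hn't₂
end

section
/- Let i ∈ J and let m be the p-adic valuation of ξ_i (well defined since ξ_i > 0). Then m ≥ 1. If m ≥ 2, then ξ_i = p^m · (n_{i−m} − (p^f − 1)). If m = 1, then ξ_i = p · n_{i−1} in case ξ_i/p ≥ (p^f − 1)/(p − 1), and ξ_i = p · (n_{i−1} − (p^f − 1)) otherwise. -/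
/-!
Write `σ_x = ±r_x` for the digits signed according to `J`. For `i ∈ J`, periodicity turns `ξ_i`
into `p · V`, where `V` is the base-`p` value of the signed digit string `σ_i, …, σ_{i+f-1}`,
whose leading digit is `r_i > 0`. Read from the left, the running value of this string can only
drop to `1` along a stretch `1, -(p-1), …, -(p-1)`, and maximality forbids the next digit to be
`-p`; hence `V ≥ 1`. Not all digits are `p`, so `V < pQ` with `Q = (p^f-1)/(p-1)`, and likewise
`Q ≤ n_l < pQ`. From `p n_{l-1} = n_l + a_l (p^f-1)` we get `p^M n_{i-M} ≡ n_i ≡ ξ_i` modulo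
`p^f - 1`, which is prime to `p`; so if `ξ_i = p^M u` then `n_{i-M} ≡ u`, and the bounds leave
only `n_{i-M} = u` (when `u ≥ Q`) or `n_{i-M} = u + (p^f-1)` (when `u < Q`).
-/

def ofDigitsAfter (p : ℤ) (d : ℤ → ℤ) (l : ℤ) (t : ℕ) : ℤ :=
  ∑ j ∈ Finset.range t, d (l + j + 1) * p ^ (t - 1 - j)

section ofDigitsAfter

variable {p c l : ℤ} {d e : ℤ → ℤ} {f t : ℕ}

lemma ofDigitsAfter_succ (p : ℤ) (d : ℤ → ℤ) (l : ℤ) (t : ℕ) :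
    ofDigitsAfter p d l (t + 1) = p * ofDigitsAfter p d l t + d (l + t + 1) := by
  simp only [ofDigitsAfter, Finset.sum_range_succ, Finset.mul_sum, Nat.add_sub_cancel,
    Nat.sub_self, pow_zero, mul_one]
  congr 1
  refine Finset.sum_congr rfl fun j hj => ?_
  rw [show t - j = t - 1 - j + 1 by have := Finset.mem_range.mp hj; omega, pow_succ]
  ring

lemma ofDigitsAfter_sub_one_succ (p : ℤ) (d : ℤ → ℤ) (l : ℤ) (t : ℕ) :
    ofDigitsAfter p d (l - 1) (t + 1) = d l * p ^ t + ofDigitsAfter p d l t := by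
  rw [ofDigitsAfter, Finset.sum_range_succ', add_comm]
  congr 1
  · simp
  · refine Finset.sum_congr rfl fun j _ => ?_
    rw [show l - 1 + ((j + 1 : ℕ) : ℤ) + 1 = l + j + 1 by push_cast; ring,
      show t + 1 - 1 - (j + 1) = t - 1 - j by omega]

lemma mul_ofDigitsAfter_sub_one (hd : Function.Periodic d f) (p l : ℤ) :
    p * ofDigitsAfter p d (l - 1) f = ofDigitsAfter p d l f + d l * (p ^ f - 1) := by
  cases f with
  | zero => simp [ofDigitsAfter]
  | succ F =>
    have hlast : d (l + F + 1) = d l := by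
      have := hd l
      push_cast at this
      rwa [← add_assoc] at this
    rw [ofDigitsAfter_sub_one_succ, ofDigitsAfter_succ, hlast]
    ring

lemma sub_one_dvd_pow_mul_ofDigitsAfter_sub (hd : Function.Periodic d f) (p l : ℤ) (M : ℕ) :
    p ^ f - 1 ∣ p ^ M * ofDigitsAfter p d (l - M) f - ofDigitsAfter p d l f := by
  induction M with
  | zero => simp
  | succ M ih =>
    have hshift := mul_ofDigitsAfter_sub_one hd p (l - M)
    rw [show l - ((M + 1 : ℕ) : ℤ) = l - M - 1 by push_cast; ring,
      show p ^ (M + 1) * ofDigitsAfter p d (l - M - 1) f - ofDigitsAfter p d l f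
        = p ^ M * d (l - M) * (p ^ f - 1)
          + (p ^ M * ofDigitsAfter p d (l - M) f - ofDigitsAfter p d l f) by
        rw [pow_succ]; linear_combination p ^ M * hshift]
    exact dvd_add (dvd_mul_left _ _) ih

lemma ofDigitsAfter_const (p c l : ℤ) (t : ℕ) :
    ofDigitsAfter p (fun _ => c) l t = c * ∑ k ∈ Finset.range t, p ^ k := by
  rw [ofDigitsAfter, Finset.mul_sum]
  exact Finset.sum_range_reflect (fun k => c * p ^ k) t

lemma ofDigitsAfter_le_ofDigitsAfter (hp : 0 ≤ p)
    (h : ∀ j < t, d (l + j + 1) ≤ e (l + j + 1)) :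
    ofDigitsAfter p d l t ≤ ofDigitsAfter p e l t :=
  Finset.sum_le_sum fun j hj =>
    mul_le_mul_of_nonneg_right (h j (Finset.mem_range.mp hj)) (pow_nonneg hp _)

lemma ofDigitsAfter_lt_ofDigitsAfter (hp : 0 < p) (h : ∀ j < t, d (l + j + 1) ≤ e (l + j + 1))
    (hlt : ∃ j < t, d (l + j + 1) < e (l + j + 1)) :
    ofDigitsAfter p d l t < ofDigitsAfter p e l t := by
  obtain ⟨j, hj, hjlt⟩ := hlt
  exact Finset.sum_lt_sum
    (fun j hj => mul_le_mul_of_nonneg_right (h j (Finset.mem_range.mp hj)) (pow_nonneg hp.le _))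
    ⟨j, Finset.mem_range.mpr hj, mul_lt_mul_of_pos_right hjlt (pow_pos hp _)⟩

lemma mul_geom_sum_le_ofDigitsAfter (hp : 0 ≤ p) (h : ∀ x, c ≤ d x) :
    c * ∑ k ∈ Finset.range t, p ^ k ≤ ofDigitsAfter p d l t := by
  rw [← ofDigitsAfter_const p c l]
  exact ofDigitsAfter_le_ofDigitsAfter hp fun j _ => h _

lemma Function.Periodic.exists_lt_eq {α : Type*} {g : ℤ → α} (hg : Function.Periodic g f)
    (hf : 0 < f) (l x : ℤ) : ∃ j < f, g (l + j + 1) = g x := by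
  obtain ⟨y, ⟨hly, hyl⟩, hxy⟩ := hg.exists_mem_Ioc (by exact_mod_cast hf) x l
  refine ⟨(y - l - 1).toNat, by omega, ?_⟩
  rw [hxy]
  congr 1
  omega

lemma Function.Periodic.ofDigitsAfter_lt_mul_geom_sum (hd : Function.Periodic d f) (hp : 0 < p)
    (hf : 0 < f) (hle : ∀ x, d x ≤ c) (hlt : ∃ x, d x < c) (l : ℤ) :
    ofDigitsAfter p d l f < c * ∑ k ∈ Finset.range f, p ^ k := by
  rw [← ofDigitsAfter_const p c l]
  obtain ⟨x, hx⟩ := hlt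
  obtain ⟨j, hj, hjx⟩ := hd.exists_lt_eq hf l x
  exact ofDigitsAfter_lt_ofDigitsAfter hp (fun j _ => hle _) ⟨j, hj, hjx ▸ hx⟩

end ofDigitsAfter

lemma isCoprime_pow_sub_one_self {R : Type*} [CommRing R] (x : R) {f : ℕ} (hf : f ≠ 0) :
    IsCoprime (x ^ f - 1) x :=
  ⟨-1, x ^ (f - 1), by
    rw [← pow_succ, Nat.sub_add_cancel (Nat.one_le_iff_ne_zero.mpr hf)]
    ring⟩

open scoped Classical in
noncomputable def signedDigit (r : ℤ → ℤ) (J : Set ℤ) (x : ℤ) : ℤ :=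
  (if x ∈ J then 1 else -1) * r x

/-- The signed digits at `j, …, l` read `1, -(p-1), …, -(p-1)`, a string of value `1`. -/
def IsCriticalRun (p : ℤ) (r : ℤ → ℤ) (J : Set ℤ) (j l : ℤ) : Prop :=
  j ≤ l ∧ j ∈ J ∧ r j = 1 ∧ ∀ k, j < k → k ≤ l → r k = p - 1 ∧ k ∉ J

section signedDigit

variable {p l : ℤ} {r : ℤ → ℤ} {J : Set ℤ} {f : ℕ}

lemma signedDigit_periodic (hr : Function.Periodic r f) (hJ : ∀ x, x ∈ J ↔ x + f ∈ J) :
    Function.Periodic (signedDigit r J) f := fun x => by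
  rw [signedDigit, signedDigit, hr x, ← propext (hJ x)]

lemma signedDigit_le {x : ℤ} (hr : 0 ≤ r x) : signedDigit r J x ≤ r x := by
  unfold signedDigit
  split_ifs <;> linarith

lemma IsCriticalRun.succ {j : ℤ} (h : IsCriticalRun p r J j l) (hr : r (l + 1) = p - 1)
    (hJ : l + 1 ∉ J) : IsCriticalRun p r J j (l + 1) := by
  obtain ⟨hjl, hj, hrj, hrun⟩ := h
  refine ⟨by omega, hj, hrj, fun k hjk hkl => ?_⟩
  rcases eq_or_lt_of_le hkl with rfl | hkl
  · exact ⟨hr, hJ⟩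
  · exact hrun k hjk (by omega)

lemma IsCriticalRun.ne_of_notMem
    (hmax : ∀ i j : ℤ, j < i → r j = 1 → (∀ k : ℤ, j < k → k < i → r k = p - 1) →
      r i = p → (∀ k : ℤ, j < k → k ≤ i → k ∉ J) → j ∉ J)
    {j : ℤ} (h : IsCriticalRun p r J j l) (hJ : l + 1 ∉ J) : r (l + 1) ≠ p := by
  obtain ⟨hjl, hj, hrj, hrun⟩ := h
  refine fun hrp => hmax (l + 1) j (by omega) hrj
    (fun k hjk hkl => (hrun k hjk (by omega)).1) hrp (fun k hjk hkl => ?_) hj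
  rcases eq_or_lt_of_le hkl with rfl | hkl
  · exact hJ
  · exact (hrun k hjk (by omega)).2

lemma one_le_ofDigitsAfter_signedDigit (hp : 2 ≤ p) (hr_lb : ∀ x, 1 ≤ r x)
    (hr_ub : ∀ x, r x ≤ p)
    (hmax : ∀ i j : ℤ, j < i → r j = 1 → (∀ k : ℤ, j < k → k < i → r k = p - 1) →
      r i = p → (∀ k : ℤ, j < k → k ≤ i → k ∉ J) → j ∉ J)
    (hl : l + 1 ∈ J) (t : ℕ) (ht : 1 ≤ t) :
    1 ≤ ofDigitsAfter p (signedDigit r J) l t ∧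
      (ofDigitsAfter p (signedDigit r J) l t = 1 → ∃ j, IsCriticalRun p r J j (l + t)) := by
  induction t, ht using Nat.le_induction with
  | base =>
    have hV : ofDigitsAfter p (signedDigit r J) l 1 = r (l + 1) := by
      simp [ofDigitsAfter, signedDigit, hl]
    rw [hV, Nat.cast_one]
    exact ⟨hr_lb _, fun h => ⟨l + 1, le_rfl, hl, h, fun k hk hk' => by omega⟩⟩
  | succ t _ ih =>
    obtain ⟨hV, hV1⟩ := ih
    have hr := hr_lb (l + t + 1)
    have hr' := hr_ub (l + t + 1)
    rw [ofDigitsAfter_succ, Nat.cast_succ, ← add_assoc]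
    by_cases hJ : l + t + 1 ∈ J
    · simp only [signedDigit, hJ, if_true, one_mul]
      exact ⟨by nlinarith, fun h => by nlinarith⟩
    · simp only [signedDigit, hJ, if_false, neg_one_mul]
      rcases eq_or_lt_of_le hV with hV | hV
      · obtain ⟨j, hj⟩ := hV1 hV.symm
        have hrp := hj.ne_of_notMem hmax hJ
        rw [← hV, mul_one]
        exact ⟨by omega, fun h => ⟨j, hj.succ (by omega) hJ⟩⟩
      · exact ⟨by nlinarith, fun h => by nlinarith⟩

lemma exists_signedDigit_lt (hr_lb : ∀ x, 1 ≤ r x) (hr_ub : ∀ x, r x ≤ p)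
    (h : ¬ ((∀ x, r x = p) ∧ J = Set.univ)) : ∃ x, signedDigit r J x < p := by
  by_contra! hσ
  refine h ⟨fun x => le_antisymm (hr_ub x) ?_, Set.eq_univ_of_forall fun x => ?_⟩
  · linarith [hσ x, signedDigit_le (J := J) (by linarith [hr_lb x] : 0 ≤ r x)]
  · by_contra hx
    have := hσ x
    simp only [signedDigit, hx, if_false] at this
    linarith [hr_lb x, hr_ub x]

end signedDigit

section residues

variable {p Q D N u : ℤ}

lemma eq_of_dvd_sub_of_le (hD : (p - 1) * Q = D) (hdvd : D ∣ N - u) (hQN : Q ≤ N)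
    (hNQ : N < p * Q) (hQu : Q ≤ u) (huQ : u < p * Q) : N = u := by
  have hD' : D = p * Q - Q := by rw [← hD]; ring
  have := Int.eq_zero_of_abs_lt_dvd hdvd (abs_lt.mpr ⟨by linarith, by linarith⟩)
  linarith

lemma eq_add_of_dvd_sub_of_lt (hp : 2 ≤ p) (hD : (p - 1) * Q = D) (hdvd : D ∣ N - u)
    (hQN : Q ≤ N) (hNQ : N < p * Q) (hu : 0 ≤ u) (huQ : u < Q) : N = u + D := by
  obtain ⟨c, hc⟩ := hdvd
  have hD0 : 0 < D := by rw [← hD]; nlinarith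
  have hc0 : 0 < c := pos_of_mul_pos_right (by linarith) hD0.le
  have hc2 : c < 2 := lt_of_mul_lt_mul_left (by nlinarith) hD0.le
  obtain rfl : c = 1 := by omega
  linarith

end residues

theorem eq_of_pow_dvd_of_not_pow_succ_dvd {p Q D ξ V i : ℤ} {n : ℤ → ℤ} (hp : 2 ≤ p)
    (hD : (p - 1) * Q = D) (hξ : ξ = p * V) (hV : 1 ≤ V) (hVQ : V < p * Q)
    (hn : ∀ l, Q ≤ n l ∧ n l < p * Q)
    (hdvd : ∀ (M : ℕ) (u : ℤ), ξ = p ^ M * u → D ∣ n (i - M) - u)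
    {m : ℕ} (hm : p ^ m ∣ ξ ∧ ¬ p ^ (m + 1) ∣ ξ) :
    1 ≤ m ∧ (2 ≤ m → ξ = p ^ m * (n (i - m) - D)) ∧
      (m = 1 → (Q ≤ ξ / p → ξ = p * n (i - 1)) ∧
        (ξ / p < Q → ξ = p * (n (i - 1) - D))) := by
  have hp0 : 0 < p := by omega
  have hξV : ξ / p = V := by rw [hξ, Int.mul_ediv_cancel_left _ hp0.ne']
  have hdvd₁ : D ∣ n (i - 1) - V := by simpa using hdvd 1 V (by rw [hξ, pow_one])
  refine ⟨Nat.one_le_iff_ne_zero.mpr ?_, fun hm2 => ?_,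
    fun _ => ⟨fun hQV => ?_, fun hVQ' => ?_⟩⟩
  · rintro rfl
    exact hm.2 (by rw [hξ, zero_add, pow_one]; exact dvd_mul_right p V)
  · obtain ⟨u, hu⟩ := hm.1
    have hVu : V = p ^ (m - 1) * u := mul_left_cancel₀ hp0.ne' <| by
      rw [← hξ, hu, ← mul_assoc, ← pow_succ', Nat.sub_add_cancel (by omega)]
    have hpm : p ≤ p ^ (m - 1) := le_self_pow₀ (by omega) (by omega)
    have hu0 : 0 < u := pos_of_mul_pos_right (a := p ^ (m - 1)) (by omega) (by positivity)
    have huQ : u < Q := lt_of_mul_lt_mul_left (by nlinarith) hp0.le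
    rw [hu, eq_add_of_dvd_sub_of_lt hp hD (hdvd m u hu) (hn _).1 (hn _).2 hu0.le huQ]
    ring
  · rw [hξV] at hQV
    rw [hξ, eq_of_dvd_sub_of_le hD hdvd₁ (hn _).1 (hn _).2 hQV hVQ]
  · rw [hξV] at hVQ'
    rw [hξ, eq_add_of_dvd_sub_of_lt hp hD hdvd₁ (hn _).1 (hn _).2 (by omega) hVQ']
    ring

open scoped Classical in
theorem stmt_3_general (p f : ℕ) (hp : p.Prime) (hf : 1 ≤ f)
    (r : ℤ → ℤ) (hr_per : ∀ i : ℤ, r (i + f) = r i)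
    (hr_lb : ∀ i : ℤ, 1 ≤ r i) (hr_ub : ∀ i : ℤ, r i ≤ p)
    (J : Set ℤ) (hJ_per : ∀ i : ℤ, i ∈ J ↔ i + f ∈ J)
    (xi : ℤ → ℤ)
    (hxi : ∀ i : ℤ, xi i =
      (∑ j ∈ Finset.range f,
        (if (i + j + 1 : ℤ) ∈ J then (1 : ℤ) else -1) * r (i + j + 1) * (p : ℤ) ^ (f - 1 - j))
      + (if i ∈ J then r i * ((p : ℤ) ^ f - 1) else 0))
    (hmax₁ : ∀ i j : ℤ, j < i → r j = 1 → (∀ k : ℤ, j < k → k < i → r k = p - 1) →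
      r i = p → (∀ k : ℤ, j < k → k ≤ i → k ∉ J) → j ∉ J)
    (hJ_ne_univ : (∀ i : ℤ, r i = p) → J ≠ Set.univ)
    (a : ℤ → ℤ) (ha_per : ∀ i : ℤ, a (i + f) = a i)
    (ha_lb : ∀ i : ℤ, 1 ≤ a i) (ha_ub : ∀ i : ℤ, a i ≤ p)
    (ha_ne : ∃ i : ℤ, a i ≠ p)
    (n : ℤ → ℤ)
    (hn : ∀ i : ℤ, n i = ∑ j ∈ Finset.range f, a (i + j + 1) * (p : ℤ) ^ (f - 1 - j))
    (hcong : ∀ i : ℤ, ((p : ℤ) ^ f - 1) ∣ (xi i - n i))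
    (i : ℤ) (hi : i ∈ J)
    (m : ℕ) (hm : (p : ℤ) ^ m ∣ xi i ∧ ¬ (p : ℤ) ^ (m + 1) ∣ xi i) :
    1 ≤ m ∧
    (2 ≤ m → xi i = (p : ℤ) ^ m * (n (i - m) - ((p : ℤ) ^ f - 1))) ∧
    (m = 1 →
      ((∑ j ∈ Finset.range f, (p : ℤ) ^ j) ≤ xi i / p → xi i = (p : ℤ) * n (i - 1)) ∧
      (xi i / p < ∑ j ∈ Finset.range f, (p : ℤ) ^ j →
        xi i = (p : ℤ) * (n (i - 1) - ((p : ℤ) ^ f - 1)))) := by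
  have hp2 : (2 : ℤ) ≤ p := by exact_mod_cast hp.two_le
  have hσ := signedDigit_periodic hr_per hJ_per
  have hn' : n = fun l => ofDigitsAfter p a l f := funext hn
  have hξ : xi i = p * ofDigitsAfter p (signedDigit r J) (i - 1) f := by
    rw [mul_ofDigitsAfter_sub_one hσ, hxi i, if_pos hi]
    simp [signedDigit, hi, ofDigitsAfter]
  have hV := (one_le_ofDigitsAfter_signedDigit (l := i - 1) hp2 hr_lb hr_ub hmax₁
    (by simpa using hi) f hf).1
  have hσ_lt := exists_signedDigit_lt hr_lb hr_ub fun h => hJ_ne_univ h.1 h.2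
  refine eq_of_pow_dvd_of_not_pow_succ_dvd hp2 (mul_geom_sum _ _) hξ hV
    (hσ.ofDigitsAfter_lt_mul_geom_sum (by omega) hf
      (fun x => (signedDigit_le (by linarith [hr_lb x])).trans (hr_ub x)) hσ_lt _)
    (fun l => ?_) (fun M u hu => ?_) hm
  · rw [hn']
    refine ⟨by simpa using mul_geom_sum_le_ofDigitsAfter (by omega) ha_lb,
      Function.Periodic.ofDigitsAfter_lt_mul_geom_sum (d := a) ha_per (by omega) hf ha_ub ?_ l⟩
    exact ha_ne.imp fun x hx => lt_of_le_of_ne (ha_ub x) hx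
  · refine ((isCoprime_pow_sub_one_self (p : ℤ) (by omega)).pow_right (n := M)
      ).dvd_of_dvd_mul_left ?_
    have := dvd_sub (sub_one_dvd_pow_mul_ofDigitsAfter_sub ha_per p i M) (hcong i)
    rw [hn', hu] at this
    convert this using 1
    rw [hn']
    ring

open scoped Classical in
/-- Lemma 3.12 ("xi_i in terms of n_l"): if `i ∈ J` and `m = v_p(ξ_i)`, then `m ≥ 1`;
if `m ≥ 2` then `ξ_i = p^m (n_{i-m} - (p^f - 1))`; and if `m = 1` then `ξ_i = p n_{i-1}`
in case `ξ_i / p ≥ (p^f - 1)/(p - 1)` (the latter written as `∑_{j<f} p^j`), and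
`ξ_i = p (n_{i-1} - (p^f - 1))` otherwise. -/
theorem stmt_3 (p f : ℕ) (hp : p.Prime) (hf : 1 ≤ f)
    (r : ℤ → ℤ) (hr_per : ∀ i : ℤ, r (i + f) = r i)
    (hr_lb : ∀ i : ℤ, 1 ≤ r i) (hr_ub : ∀ i : ℤ, r i ≤ p)
    (J : Set ℤ) (hJ_per : ∀ i : ℤ, i ∈ J ↔ i + f ∈ J)
    (xi : ℤ → ℤ)
    (hxi : ∀ i : ℤ, xi i =
      (∑ j ∈ Finset.range f,
        (if (i + j + 1 : ℤ) ∈ J then (1 : ℤ) else -1) * r (i + j + 1) * (p : ℤ) ^ (f - 1 - j))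
      + (if i ∈ J then r i * ((p : ℤ) ^ f - 1) else 0))
    (hmax₁ : ∀ i j : ℤ, j < i → r j = 1 → (∀ k : ℤ, j < k → k < i → r k = p - 1) →
      r i = p → (∀ k : ℤ, j < k → k ≤ i → k ∉ J) → j ∉ J)
    (hmax₂ : ((∀ i : ℤ, r i = p - 1) ∨ (p = 2 ∧ ∀ i : ℤ, r i = 2)) → J.Nonempty)
    (hJ_ne_univ : (∀ i : ℤ, r i = p) → J ≠ Set.univ)
    (a : ℤ → ℤ) (ha_per : ∀ i : ℤ, a (i + f) = a i)
    (ha_lb : ∀ i : ℤ, 1 ≤ a i) (ha_ub : ∀ i : ℤ, a i ≤ p)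
    (ha_ne : ∃ i : ℤ, a i ≠ p)
    (n : ℤ → ℤ)
    (hn : ∀ i : ℤ, n i = ∑ j ∈ Finset.range f, a (i + j + 1) * (p : ℤ) ^ (f - 1 - j))
    (hcong : ∀ i : ℤ, ((p : ℤ) ^ f - 1) ∣ (xi i - n i))
    (i : ℤ) (hi : i ∈ J)
    (m : ℕ) (hm : (p : ℤ) ^ m ∣ xi i ∧ ¬ (p : ℤ) ^ (m + 1) ∣ xi i) :
    1 ≤ m ∧
    (2 ≤ m → xi i = (p : ℤ) ^ m * (n (i - m) - ((p : ℤ) ^ f - 1))) ∧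
    (m = 1 →
      ((∑ j ∈ Finset.range f, (p : ℤ) ^ j) ≤ xi i / p → xi i = (p : ℤ) * n (i - 1)) ∧
      (xi i / p < ∑ j ∈ Finset.range f, (p : ℤ) ^ j →
        xi i = (p : ℤ) * (n (i - 1) - ((p : ℤ) ^ f - 1)))) :=
  stmt_3_general p f hp hf r hr_per hr_lb hr_ub J hJ_per xi hxi hmax₁ hJ_ne_univ a ha_per ha_lb
    ha_ub ha_ne n hn hcong i hi m hm
end

section
/- If i ∈ J, then there is no integer m ≥ 0 satisfying ξ_i − p·(p^f − 1) = p^m · (p^f − 1). -/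
/-!
If `i ∈ J` and `ξ_i - p(p^f - 1) = p^m (p^f - 1)`, the signed tail
`S = ξ_i - r_i (p^f - 1)` equals `c (p^f - 1)` with `c = p^m + p - r_i ≥ 1`. Since every digit is
at most `p`, `S ≤ p (p^f - 1)/(p - 1)`, so `c (p - 1) ≤ p`. Either `c = 1`, which forces `r_i = p`;
then `S ≡ ±r_{i+f} = ±r_i ≡ 0 (mod p)` while `p^f - 1 ≡ -1`. Or `p = c = 2`, in which case the
bound is attained, so all `r_k = p` and all `k ∈ J` by periodicity, which is excluded.
-/

open Finset

lemma sign_mul_le {q : Prop} [Decidable q] {p x y : ℤ} (hx : 1 ≤ x) (hxp : x ≤ p) (hy : 0 ≤ y) :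
    (if q then 1 else -1) * x * y ≤ p * y := by
  split_ifs <;> nlinarith

lemma sign_mul_eq_iff {q : Prop} [Decidable q] {p x y : ℤ} (hx : 1 ≤ x) (hxp : x ≤ p)
    (hy : 0 < y) : (if q then 1 else -1) * x * y = p * y ↔ q ∧ x = p := by
  split_ifs with hq
  · simp [hq, hy.ne']
  · simp only [hq, false_and, iff_false]
    nlinarith

lemma Int.eq_one_or_of_mul_sub_one_le {p c : ℤ} (hp : 2 ≤ p) (hc : 1 ≤ c)
    (h : c * (p - 1) ≤ p) : c = 1 ∨ p = 2 ∧ c = 2 := by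
  rcases eq_or_lt_of_le hc with rfl | hc
  · exact Or.inl rfl
  · right
    constructor <;> nlinarith

lemma Int.not_dvd_pow_sub_one {p : ℤ} (hp : 2 ≤ p) {f : ℕ} (hf : f ≠ 0) : ¬ p ∣ p ^ f - 1 := by
  intro h
  have h1 : p ∣ 1 := (dvd_sub_right (dvd_pow_self p hf)).mp h
  linarith [Int.le_of_dvd one_pos h1]

lemma sum_range_pow_reflect (p : ℤ) (f : ℕ) :
    ∑ j ∈ range f, p ^ (f - 1 - j) = ∑ j ∈ range f, p ^ j :=
  sum_range_reflect (fun j => p ^ j) f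

open scoped Classical in
/-- The sum in `ξ_i` without its `δ_i r_i (p^f - 1)` term. -/
noncomputable def signedTail (p f : ℕ) (r : ℤ → ℤ) (J : Set ℤ) (i : ℤ) : ℤ :=
  ∑ j ∈ range f, (if (i + j + 1 : ℤ) ∈ J then (1 : ℤ) else -1) * r (i + j + 1) * (p : ℤ) ^ (f - 1 - j)

section SignedTail

open scoped Classical

variable {p f : ℕ} {r : ℤ → ℤ} {J : Set ℤ}

lemma signedTail_le (hr_lb : ∀ k, 1 ≤ r k) (hr_ub : ∀ k, r k ≤ p) (i : ℤ) :
    signedTail p f r J i ≤ p * ∑ j ∈ range f, (p : ℤ) ^ j := by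
  rw [← sum_range_pow_reflect, mul_sum]
  exact sum_le_sum fun j _ => sign_mul_le (hr_lb _) (hr_ub _) (by positivity)

lemma forall_eq_and_mem_of_signedTail_eq (hf : 1 ≤ f)
    (hr_per : ∀ k : ℤ, r (k + f) = r k) (hr_lb : ∀ k, 1 ≤ r k) (hr_ub : ∀ k, r k ≤ p)
    (hJ_per : ∀ k : ℤ, k ∈ J ↔ k + f ∈ J) {i : ℤ}
    (h : signedTail p f r J i = p * ∑ j ∈ range f, (p : ℤ) ^ j) :
    ∀ k, r k = p ∧ k ∈ J := by
  rw [← sum_range_pow_reflect, mul_sum, signedTail,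
    sum_eq_sum_iff_of_le fun j _ => sign_mul_le (hr_lb _) (hr_ub _) (by positivity)] at h
  have hp : (0 : ℤ) < p := by linarith [hr_lb 0, hr_ub 0]
  have hwindow : ∀ y ∈ Set.Ioc i (i + f), r y = p ∧ y ∈ J := by
    rintro y ⟨hiy, hyf⟩
    have hj : (y - i - 1).toNat ∈ range f := mem_range.mpr (by omega)
    have hy : i + ((y - i - 1).toNat : ℤ) + 1 = y := by omega
    have := (sign_mul_eq_iff (hr_lb _) (hr_ub _) (pow_pos hp _)).mp (h _ hj)
    rw [hy] at this
    exact this.symm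
  have hQ : Function.Periodic (fun k => r k = p ∧ k ∈ J) (f : ℤ) := fun k => by
    simp only [hr_per, ← hJ_per]
  intro k
  obtain ⟨y, hy, hky⟩ := hQ.exists_mem_Ioc (by omega) k i
  exact hky ▸ hwindow y hy

lemma dvd_signedTail (hf : 1 ≤ f) (hr_per : ∀ k : ℤ, r (k + f) = r k) {i : ℤ} (hri : r i = p) :
    (p : ℤ) ∣ signedTail p f r J i := by
  refine dvd_sum fun j hj => ?_
  rcases Nat.lt_or_ge j (f - 1) with hj' | hj'
  · exact (dvd_pow_self _ (by omega)).mul_left _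
  · obtain rfl : j = f - 1 := by have := mem_range.mp hj; omega
    have hlast : i + ((f - 1 : ℕ) : ℤ) + 1 = i + f := by omega
    rw [hlast, hr_per, hri]
    exact (dvd_mul_left (p : ℤ) _).mul_right _

end SignedTail

open scoped Classical in
theorem stmt_4_general (p f : ℕ) (hp : p.Prime) (hf : 1 ≤ f)
    (r : ℤ → ℤ) (hr_per : ∀ i : ℤ, r (i + f) = r i)
    (hr_lb : ∀ i : ℤ, 1 ≤ r i) (hr_ub : ∀ i : ℤ, r i ≤ p)
    (J : Set ℤ) (hJ_per : ∀ i : ℤ, i ∈ J ↔ i + f ∈ J)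
    (xi : ℤ → ℤ)
    (hxi : ∀ i : ℤ, xi i =
      (∑ j ∈ Finset.range f,
        (if (i + j + 1 : ℤ) ∈ J then (1 : ℤ) else -1) * r (i + j + 1) * (p : ℤ) ^ (f - 1 - j))
      + (if i ∈ J then r i * ((p : ℤ) ^ f - 1) else 0))
    (hJ_ne_univ : (∀ i : ℤ, r i = p) → J ≠ Set.univ)
    (i : ℤ) (hi : i ∈ J) :
    ∀ m : ℕ, xi i - (p : ℤ) * ((p : ℤ) ^ f - 1) ≠ (p : ℤ) ^ m * ((p : ℤ) ^ f - 1) := by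
  intro m hm
  have hp2 : 2 ≤ p := hp.two_le
  set G := ∑ j ∈ range f, (p : ℤ) ^ j
  have hGP : G * (p - 1) = (p : ℤ) ^ f - 1 := geom_sum_mul _ f
  have hG : 0 < G := sum_pos (fun _ _ => by positivity) (nonempty_range_iff.mpr (by omega))
  have htail : signedTail p f r J i = ((p : ℤ) ^ m + p - r i) * ((p : ℤ) ^ f - 1) := by
    rw [hxi i, if_pos hi] at hm
    rw [signedTail]
    linear_combination hm
  have hpm : 1 ≤ (p : ℤ) ^ m := one_le_pow₀ (by omega)
  have hc : 1 ≤ (p : ℤ) ^ m + p - r i := by linarith [hr_ub i]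
  have hbound : ((p : ℤ) ^ m + p - r i) * (p - 1) ≤ p := by
    have := signedTail_le (f := f) (J := J) hr_lb hr_ub i
    rw [htail, ← hGP] at this
    exact le_of_mul_le_mul_right (by linear_combination this) hG
  rcases Int.eq_one_or_of_mul_sub_one_le (by omega) hc hbound with hc1 | ⟨hp2', hc2⟩
  · have hri : r i = p := by linarith [hr_ub i]
    have hdvd := dvd_signedTail (J := J) hf hr_per hri
    rw [htail, hc1, one_mul] at hdvd
    exact Int.not_dvd_pow_sub_one (by omega) (by omega) hdvd
  · have hall := forall_eq_and_mem_of_signedTail_eq hf hr_per hr_lb hr_ub hJ_per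
      (by rw [htail, hc2, ← hGP]; linear_combination G * hp2')
    exact hJ_ne_univ (fun k => (hall k).1) (Set.eq_univ_of_forall fun k => (hall k).2)

open scoped Classical in
/-- Lemma 3.13 ("extra pairing lemma, trivial character"): assume `χ = 1`, i.e.
`ξ_i ≡ 0 (mod p^f - 1)` for all `i`. If `i ∈ J`, then there is no integer `m ≥ 0`
with `ξ_i - p (p^f - 1) = p^m (p^f - 1)`. -/
theorem stmt_4 (p f : ℕ) (hp : p.Prime) (hf : 1 ≤ f)
    (r : ℤ → ℤ) (hr_per : ∀ i : ℤ, r (i + f) = r i)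
    (hr_lb : ∀ i : ℤ, 1 ≤ r i) (hr_ub : ∀ i : ℤ, r i ≤ p)
    (J : Set ℤ) (hJ_per : ∀ i : ℤ, i ∈ J ↔ i + f ∈ J)
    (xi : ℤ → ℤ)
    (hxi : ∀ i : ℤ, xi i =
      (∑ j ∈ Finset.range f,
        (if (i + j + 1 : ℤ) ∈ J then (1 : ℤ) else -1) * r (i + j + 1) * (p : ℤ) ^ (f - 1 - j))
      + (if i ∈ J then r i * ((p : ℤ) ^ f - 1) else 0))
    (hmax₁ : ∀ i j : ℤ, j < i → r j = 1 → (∀ k : ℤ, j < k → k < i → r k = p - 1) →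
      r i = p → (∀ k : ℤ, j < k → k ≤ i → k ∉ J) → j ∉ J)
    (hmax₂ : ((∀ i : ℤ, r i = p - 1) ∨ (p = 2 ∧ ∀ i : ℤ, r i = 2)) → J.Nonempty)
    (hJ_ne_univ : (∀ i : ℤ, r i = p) → J ≠ Set.univ)
    (hcong : ∀ i : ℤ, ((p : ℤ) ^ f - 1) ∣ xi i)
    (i : ℤ) (hi : i ∈ J) :
    ∀ m : ℕ, xi i - (p : ℤ) * ((p : ℤ) ^ f - 1) ≠ (p : ℤ) ^ m * ((p : ℤ) ^ f - 1) :=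
  stmt_4_general p f hp hf r hr_per hr_lb hr_ub J hJ_per xi hxi hJ_ne_univ i hi
end

section
/- In K[[X]] one has ∏_{k=0}^{p^n − 1} E(ζ^k X) = E(X^{p^n}). (This is the formal power-series identity underlying the norm compatibility N_{K_n/K} E([a^{1/p^n}](π^{1/p^n})^r) = E([a]π^r) of the Artin–Hasse exponential.) -/
/-!
Write `E = exp ∘ S` with `S = ∑ X^{p^m}/p^m`. Composition with `exp` turns sums of series
without constant term into products (`exp(f+g) exp(-f) exp(-g)` has derivative `0` and constant
term `1`), and commutes with the substitutions `X ↦ ζ^k X` and `X ↦ X^{p^n}`. So it suffices to prove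
`∑_k S(ζ^k X) = S(X^{p^n})`. Summing over the roots of unity multiplies the coefficient of `X^m`
by `p^n` when `p^n ∣ m` and kills it otherwise, and `p^n · (1/(p^n m)) = 1/m`, where `p^n m` is a
power of `p` exactly when `m` is.
-/

open PowerSeries Finset

namespace PowerSeries

section CommRing
variable {R : Type*} [CommRing R]

theorem constantCoeff_rescale (a : R) (f : R⟦X⟧) :
    constantCoeff (rescale a f) = constantCoeff f := by
  rw [← coeff_zero_eq_constantCoeff_apply, coeff_rescale, pow_zero, one_mul,
    coeff_zero_eq_constantCoeff_apply]

theorem rescale_subst (a : R) (f : R⟦X⟧) {g : R⟦X⟧} (hg : constantCoeff g = 0) :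
    rescale a (f.subst g) = f.subst (rescale a g) := by
  rw [rescale_eq_subst, rescale_eq_subst,
    subst_comp_subst_apply (.of_constantCoeff_zero' hg) (.smul_X' a)]

theorem coeff_pow_eq_zero_of_lt {f : R⟦X⟧} (hf : constantCoeff f = 0) {m d : ℕ} (h : m < d) :
    coeff m (f ^ d) = 0 :=
  coeff_of_lt_order m <| (Nat.cast_lt.mpr h).trans_le (le_order_pow_of_constantCoeff_eq_zero d hf)

end CommRing

section Field
variable {K : Type*} [Field K]

theorem coeff_sum_rescale_pow_of_isPrimitiveRoot {N : ℕ} {ζ : K} (hζ : IsPrimitiveRoot ζ N)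
    (f : K⟦X⟧) (m : ℕ) :
    coeff m (∑ k ∈ range N, rescale (ζ ^ k) f) = if N ∣ m then N * coeff m f else 0 := by
  have hswap (k : ℕ) : (ζ ^ k) ^ m = (ζ ^ m) ^ k := by rw [← pow_mul, ← pow_mul, mul_comm]
  simp only [map_sum, coeff_rescale, ← sum_mul, hswap]
  split_ifs with h
  · simp [(hζ.pow_eq_one_iff_dvd m).mpr h]
  · rw [geom_sum_eq (fun h1 => h ((hζ.pow_eq_one_iff_dvd m).mp h1)) N, ← pow_mul, mul_comm m N,
      pow_mul, hζ.pow_eq_one, one_pow, sub_self, zero_div, zero_mul]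

variable [CharZero K]

theorem constantCoeff_exp_subst {f : K⟦X⟧} (hf : constantCoeff f = 0) :
    constantCoeff ((exp K).subst f) = 1 := by
  rw [← coeff_zero_eq_constantCoeff_apply, coeff_subst' (.of_constantCoeff_zero' hf),
    finsum_eq_single _ 0]
  · simp
  · intro d hd
    simp [coeff_zero_eq_constantCoeff_apply, hf, zero_pow hd]

theorem derivative_exp_subst {f : K⟦X⟧} (hf : constantCoeff f = 0) :
    d⁄dX K ((exp K).subst f) = (exp K).subst f * d⁄dX K f := by
  rw [derivative_subst (.of_constantCoeff_zero' hf), derivative_exp]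

theorem exp_subst_mul_exp_subst_neg {f : K⟦X⟧} (hf : constantCoeff f = 0) :
    (exp K).subst f * (exp K).subst (-f) = 1 := by
  have hf' : constantCoeff (-f) = 0 := by rw [map_neg, hf, neg_zero]
  refine derivative.ext ?_ ?_
  · simp only [Derivation.leibniz, derivative_exp_subst hf, derivative_exp_subst hf', map_neg,
      derivative_one, smul_eq_mul]
    ring
  · rw [map_mul, constantCoeff_exp_subst hf, constantCoeff_exp_subst hf', map_one, one_mul]

theorem exp_subst_add {f g : K⟦X⟧} (hf : constantCoeff f = 0) (hg : constantCoeff g = 0) :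
    (exp K).subst (f + g) = (exp K).subst f * (exp K).subst g := by
  have hfg : constantCoeff (f + g) = 0 := by rw [map_add, hf, hg, add_zero]
  have hf' : constantCoeff (-f) = 0 := by rw [map_neg, hf, neg_zero]
  have hg' : constantCoeff (-g) = 0 := by rw [map_neg, hg, neg_zero]
  have hprod : (exp K).subst (f + g) * (exp K).subst (-f) * (exp K).subst (-g) = 1 := by
    refine derivative.ext ?_ ?_
    · simp only [Derivation.leibniz, derivative_exp_subst hfg, derivative_exp_subst hf',
        derivative_exp_subst hg', map_neg, map_add, derivative_one, smul_eq_mul]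
      ring
    · simp only [map_mul, constantCoeff_exp_subst hfg, constantCoeff_exp_subst hf',
        constantCoeff_exp_subst hg', map_one, one_mul]
  linear_combination (-(exp K).subst (f + g) * (exp K).subst g * (exp K).subst (-g)) *
      exp_subst_mul_exp_subst_neg hf - (exp K).subst (f + g) * exp_subst_mul_exp_subst_neg hg
    + (exp K).subst f * (exp K).subst g * hprod

theorem exp_subst_sum {ι : Type*} (s : Finset ι) (f : ι → K⟦X⟧)
    (hf : ∀ i ∈ s, constantCoeff (f i) = 0) :
    (exp K).subst (∑ i ∈ s, f i) = ∏ i ∈ s, (exp K).subst (f i) := by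
  induction s using Finset.cons_induction with
  | empty => simp [subst_zero_eq_C_constantCoeff]
  | cons i s _ ih =>
    have hs : constantCoeff (∑ j ∈ s, f j) = 0 := by
      rw [map_sum]
      exact sum_eq_zero fun j hj => hf j (mem_cons_of_mem hj)
    rw [sum_cons, prod_cons, exp_subst_add (hf i (mem_cons_self i s)) hs,
      ih fun j hj => hf j (mem_cons_of_mem hj)]

theorem exp_subst_eq_mk {f : K⟦X⟧} (hf : constantCoeff f = 0) :
    (exp K).subst f = mk fun m => ∑ k ∈ range (m + 1), (k.factorial : K)⁻¹ * coeff m (f ^ k) := by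
  ext m
  rw [coeff_subst' (.of_constantCoeff_zero' hf), coeff_mk,
    finsum_eq_sum_of_support_subset (s := range (m + 1))]
  · exact sum_congr rfl fun k _ => by simp [coeff_exp, smul_eq_mul]
  · intro d hd
    by_contra h
    rw [coe_range, Set.mem_Iio, not_lt] at h
    exact hd (by
      change coeff d (exp K) • coeff m (f ^ d) = 0
      rw [coeff_pow_eq_zero_of_lt hf (by omega), smul_zero])

end Field

end PowerSeries

open scoped Classical in
noncomputable def artinHasseLog (p : ℕ) (K : Type*) [Field K] : K⟦X⟧ :=
  mk fun m => if ∃ e : ℕ, p ^ e = m then (m : K)⁻¹ else 0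

namespace artinHasseLog

variable {p : ℕ} {K : Type*} [Field K]

theorem constantCoeff_eq_zero (hp : p ≠ 0) : constantCoeff (artinHasseLog p K) = 0 := by
  rw [← coeff_zero_eq_constantCoeff_apply, artinHasseLog, coeff_mk, if_neg]
  rintro ⟨e, he⟩
  exact pow_ne_zero e hp he

variable [CharZero K]

theorem pow_mul_coeff_pow_mul (hp : p.Prime) (n m : ℕ) :
    (p : K) ^ n * coeff (p ^ n * m) (artinHasseLog p K) = coeff m (artinHasseLog p K) := by
  have hpow : (∃ e, p ^ e = p ^ n * m) ↔ ∃ e, p ^ e = m := by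
    constructor
    · rintro ⟨e, he⟩
      obtain ⟨f, -, hf⟩ := (Nat.dvd_prime_pow hp).mp (Dvd.intro_left _ he.symm)
      exact ⟨f, hf.symm⟩
    · rintro ⟨e, rfl⟩
      exact ⟨n + e, pow_add p n e⟩
  simp only [artinHasseLog, coeff_mk]
  by_cases h : ∃ e, p ^ e = m
  · rw [if_pos (hpow.mpr h), if_pos h]
    have : (p : K) ^ n ≠ 0 := pow_ne_zero n (Nat.cast_ne_zero.mpr hp.ne_zero)
    push_cast
    field_simp
  · rw [if_neg (mt hpow.mp h), if_neg h, mul_zero]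

theorem sum_rescale_eq_expand (hp : p.Prime) {n : ℕ} {ζ : K} (hζ : IsPrimitiveRoot ζ (p ^ n)) :
    ∑ k ∈ range (p ^ n), rescale (ζ ^ k) (artinHasseLog p K)
      = expand (p ^ n) (pow_ne_zero n hp.ne_zero) (artinHasseLog p K) := by
  ext m
  rw [coeff_sum_rescale_pow_of_isPrimitiveRoot hζ, coeff_expand]
  split_ifs with h
  · obtain ⟨m, rfl⟩ := h
    rw [Nat.mul_div_cancel_left m (pow_pos hp.pos n), Nat.cast_pow, pow_mul_coeff_pow_mul hp]
  · rfl

end artinHasseLog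

open scoped Classical in
theorem stmt_6_general (p n : ℕ) (hp : p.Prime)
    (K : Type*) [Field K] [CharZero K]
    (ζ : K) (hζ : IsPrimitiveRoot ζ (p ^ n))
    (S E : PowerSeries K)
    (hS : S = PowerSeries.mk fun m => if ∃ e : ℕ, p ^ e = m then (m : K)⁻¹ else 0)
    (hE : E = PowerSeries.mk fun m => ∑ k ∈ Finset.range (m + 1),
      (Nat.factorial k : K)⁻¹ * PowerSeries.coeff m (S ^ k)) :
    ∏ k ∈ Finset.range (p ^ n), PowerSeries.rescale (ζ ^ k) E
      = PowerSeries.mk fun m =>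
          if p ^ n ∣ m then PowerSeries.coeff (m / p ^ n) E else 0 := by
  obtain rfl : S = artinHasseLog p K := hS
  have hS0 := artinHasseLog.constantCoeff_eq_zero (K := K) hp.ne_zero
  obtain rfl : E = (exp K).subst (artinHasseLog p K) := hE.trans (exp_subst_eq_mk hS0).symm
  calc ∏ k ∈ range (p ^ n), rescale (ζ ^ k) ((exp K).subst (artinHasseLog p K))
      = (exp K).subst (∑ k ∈ range (p ^ n), rescale (ζ ^ k) (artinHasseLog p K)) := by
        rw [exp_subst_sum _ _ fun k _ => (constantCoeff_rescale _ _).trans hS0]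
        exact prod_congr rfl fun k _ => rescale_subst _ _ hS0
    _ = expand (p ^ n) (pow_ne_zero n hp.ne_zero) ((exp K).subst (artinHasseLog p K)) := by
        rw [artinHasseLog.sum_rescale_eq_expand hp hζ]
        exact (expand_subst _ _ (.of_constantCoeff_zero' hS0) _).symm
    _ = _ := by
        ext m
        rw [coeff_expand, coeff_mk]

open scoped Classical in
/-- Lemma 3.6 ("norm compatible Artin–Hasse"), formal power-series form: if `ζ` is a
primitive `p^n`-th root of unity in a field `K` of characteristic zero, then
`∏_{k=0}^{p^n - 1} E(ζ^k X) = E(X^{p^n})` in `K⟦X⟧`. Here `S = ∑_{m≥0} X^{p^m}/p^m`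
(its coefficient at an index `m` which is a power of `p`, say `m = p^e`, is
`1/p^e = 1/m`), `E = exp(S)` is the Artin–Hasse exponential, computed
coefficientwise (`S` has zero constant term, so the coefficient of `X^m` in
`exp(S) = ∑_k S^k/k!` is the finite sum `∑_{k ≤ m} (coeff of X^m in S^k)/k!`),
`E(ζ^k X)` is `rescale (ζ^k) E`, and `E(X^{p^n})` is the substitution of `X^{p^n}`
into `E`, whose coefficient at `m` is the coefficient of `E` at `m / p^n` when
`p^n ∣ m`, and `0` otherwise. -/
theorem stmt_6 (p n : ℕ) (hp : p.Prime) (hn : 1 ≤ n)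
    (K : Type*) [Field K] [CharZero K]
    (ζ : K) (hζ : IsPrimitiveRoot ζ (p ^ n))
    (S E : PowerSeries K)
    (hS : S = PowerSeries.mk fun m => if ∃ e : ℕ, p ^ e = m then (m : K)⁻¹ else 0)
    (hE : E = PowerSeries.mk fun m => ∑ k ∈ Finset.range (m + 1),
      (Nat.factorial k : K)⁻¹ * PowerSeries.coeff m (S ^ k)) :
    ∏ k ∈ Finset.range (p ^ n), PowerSeries.rescale (ζ ^ k) E
      = PowerSeries.mk fun m =>
          if p ^ n ∣ m then PowerSeries.coeff (m / p ^ n) E else 0 :=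
  stmt_6_general p n hp K ζ hζ S E hS hE
end

section
/- For every integer i one has ξ_i ≡ p · ξ_{i−1} (mod p^f − 1). -/
/-!
Put `c j = ε_{i+j} r_{i+j}`. The sum in `ξ_i` is `∑ c_{j+1} p^{f-1-j}` and the one in `ξ_{i-1}` is
`∑ c_j p^{f-1-j}`, so `ξ_i - p ξ_{i-1}` telescopes to `c_f - c_0 p^f` plus multiples of `p^f - 1`
coming from the `δ`-terms. By periodicity `c_f = c_0`, and `c_0 - c_0 p^f = -c_0 (p^f - 1)`.
-/

section

open Finset

variable {R : Type*} [CommRing R]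

theorem sum_range_succ_mul_pow_sub_mul_sum (c : ℕ → R) (x : R) (n : ℕ) :
    ∑ j ∈ range n, c (j + 1) * x ^ (n - 1 - j) - x * ∑ j ∈ range n, c j * x ^ (n - 1 - j)
      = c n - c 0 * x ^ n := by
  have htelescope : ∀ j ∈ range n, c (j + 1) * x ^ (n - 1 - j) - x * (c j * x ^ (n - 1 - j))
      = c (j + 1) * x ^ (n - (j + 1)) - c j * x ^ (n - j) := by
    intro j hj
    obtain ⟨k, hk⟩ : ∃ k, n - j = k + 1 := ⟨n - 1 - j, by grind⟩
    rw [hk, show n - 1 - j = k by omega, show n - (j + 1) = k by omega, pow_succ]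
    ring
  rw [mul_sum, ← sum_sub_distrib, sum_congr rfl htelescope,
    sum_range_sub (fun j ↦ c j * x ^ (n - j))]
  simp

theorem pow_sub_one_dvd_sum_range_succ_mul_pow_sub_mul_sum (c : ℕ → R) (x : R) (n : ℕ)
    (hc : c n = c 0) :
    x ^ n - 1 ∣ ∑ j ∈ range n, c (j + 1) * x ^ (n - 1 - j)
      - x * ∑ j ∈ range n, c j * x ^ (n - 1 - j) := by
  rw [sum_range_succ_mul_pow_sub_mul_sum, hc]
  exact ⟨-c 0, by ring⟩

end

open scoped Classical in
theorem stmt_9_general (p f : ℕ)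
    (r : ℤ → ℤ) (hr_per : ∀ i : ℤ, r (i + f) = r i)
    (J : Set ℤ) (hJ_per : ∀ i : ℤ, i ∈ J ↔ i + f ∈ J)
    (xi : ℤ → ℤ)
    (hxi : ∀ i : ℤ, xi i =
      (∑ j ∈ Finset.range f,
        (if (i + j + 1 : ℤ) ∈ J then (1 : ℤ) else -1) * r (i + j + 1) * (p : ℤ) ^ (f - 1 - j))
      + (if i ∈ J then r i * ((p : ℤ) ^ f - 1) else 0)) :
    ∀ i : ℤ, ((p : ℤ) ^ f - 1) ∣ (xi i - (p : ℤ) * xi (i - 1)) := by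
  intro i
  set c : ℕ → ℤ := fun j ↦ (if i + j ∈ J then 1 else -1) * r (i + j) with hc
  have hc_per : c f = c 0 := by
    simp only [hc, Nat.cast_zero, add_zero, hr_per, ← hJ_per]
  have hxi_i : xi i = ∑ j ∈ Finset.range f, c (j + 1) * (p : ℤ) ^ (f - 1 - j)
      + if i ∈ J then r i * ((p : ℤ) ^ f - 1) else 0 := by
    simp only [hxi, hc, Nat.cast_add, Nat.cast_one, add_assoc]
  have hxi_pred : xi (i - 1) = ∑ j ∈ Finset.range f, c j * (p : ℤ) ^ (f - 1 - j)
      + if i - 1 ∈ J then r (i - 1) * ((p : ℤ) ^ f - 1) else 0 := by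
    have hshift : ∀ j : ℤ, i - 1 + j + 1 = i + j := fun j ↦ by ring
    simp only [hxi, hc, hshift]
  have hcorr : ∀ k, (p : ℤ) ^ f - 1 ∣ if k ∈ J then r k * ((p : ℤ) ^ f - 1) else 0 := by
    intro k
    split_ifs
    exacts [dvd_mul_left _ _, dvd_zero _]
  have hsplit : xi i - p * xi (i - 1)
      = (∑ j ∈ Finset.range f, c (j + 1) * (p : ℤ) ^ (f - 1 - j)
          - p * ∑ j ∈ Finset.range f, c j * (p : ℤ) ^ (f - 1 - j))
        + (if i ∈ J then r i * ((p : ℤ) ^ f - 1) else 0)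
        - p * if i - 1 ∈ J then r (i - 1) * ((p : ℤ) ^ f - 1) else 0 := by
    rw [hxi_i, hxi_pred]
    ring
  rw [hsplit]
  exact dvd_sub (dvd_add (pow_sub_one_dvd_sum_range_succ_mul_pow_sub_mul_sum c _ f hc_per)
    (hcorr i)) (dvd_mul_of_dvd_right (hcorr (i - 1)) _)

open scoped Classical in
/-- For every integer `i` one has `ξ_i ≡ p ξ_{i-1} (mod p^f - 1)`. -/
theorem stmt_9 (p f : ℕ) (hp : p.Prime) (hf : 1 ≤ f)
    (r : ℤ → ℤ) (hr_per : ∀ i : ℤ, r (i + f) = r i)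
    (hr_lb : ∀ i : ℤ, 1 ≤ r i) (hr_ub : ∀ i : ℤ, r i ≤ p)
    (J : Set ℤ) (hJ_per : ∀ i : ℤ, i ∈ J ↔ i + f ∈ J)
    (xi : ℤ → ℤ)
    (hxi : ∀ i : ℤ, xi i =
      (∑ j ∈ Finset.range f,
        (if (i + j + 1 : ℤ) ∈ J then (1 : ℤ) else -1) * r (i + j + 1) * (p : ℤ) ^ (f - 1 - j))
      + (if i ∈ J then r i * ((p : ℤ) ^ f - 1) else 0)) :
    ∀ i : ℤ, ((p : ℤ) ^ f - 1) ∣ (xi i - (p : ℤ) * xi (i - 1)) :=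
  stmt_9_general p f r hr_per J hJ_per xi hxi
end

section
/- For every integer i one has n′_i > 0. -/
/-!
If `a (i-1) ≠ p`, then `n'_i = n_{i-1}` is a base-`p` expansion with positive digits. Otherwise
the digit string of `n_{j-1}` starts with a run `p-1, …, p-1, p`, which by periodicity ends within
`f` digits; such a string already has value `p^f`, so `n'_i = n_{j-1} - (p^f - 1) ≥ 1`.
-/

open Finset

/-- The digits `p-1, …, p-1, p` contribute `(p^f - p^(f-k₀)) + p^(f-k₀) = p^f`. -/
theorem pow_le_sum_mul_pow_of_carry {p : ℤ} (hp : 0 ≤ p) {b : ℕ → ℤ}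
    (hb : ∀ k, 0 ≤ b k) {k₀ f : ℕ} (hk₀f : k₀ < f) (hbefore : ∀ k < k₀, b k = p - 1)
    (hk₀ : b k₀ = p) :
    p ^ f ≤ ∑ k ∈ range f, b k * p ^ (f - 1 - k) := by
  induction k₀ generalizing f b with
  | zero =>
    obtain ⟨f, rfl⟩ := Nat.exists_eq_add_one_of_ne_zero (Nat.pos_iff_ne_zero.mp hk₀f)
    rw [sum_range_succ', hk₀, Nat.add_sub_cancel, Nat.sub_zero, pow_succ']
    have htail : 0 ≤ ∑ k ∈ range f, b (k + 1) * p ^ (f - (k + 1)) :=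
      sum_nonneg fun k _ => mul_nonneg (hb _) (pow_nonneg hp _)
    linarith
  | succ m ih =>
    obtain ⟨f, rfl⟩ := Nat.exists_eq_add_one_of_ne_zero (by omega : f ≠ 0)
    have htail := ih (f := f) (b := fun k => b (k + 1)) (fun k => hb _) (by omega)
      (fun k hk => hbefore (k + 1) (by omega)) hk₀
    have hexp : ∑ k ∈ range f, b (k + 1) * p ^ (f - (k + 1)) =
        ∑ k ∈ range f, b (k + 1) * p ^ (f - 1 - k) :=
      sum_congr rfl fun k _ => by rw [Nat.sub_sub, Nat.add_comm 1 k]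
    rw [sum_range_succ', hbefore 0 (by omega), Nat.add_sub_cancel, Nat.sub_zero, pow_succ, hexp]
    linarith

theorem Function.Periodic.sub_lt_of_forall_eq {α : Type*} {a : ℤ → α} {T : ℤ}
    (ha : Function.Periodic a T) (hT : 0 < T) {c : α} {i j : ℤ} (hi : a i ≠ c)
    (hrun : ∀ m, j ≤ m → m < i → a m = c) : i - T < j := by
  by_contra! h
  exact hi (ha.sub_eq i ▸ hrun (i - T) h (by omega))

theorem stmt_10_general (p f : ℕ) (hp : p.Prime) (hf : 1 ≤ f)
    (a : ℤ → ℤ) (ha_per : ∀ i : ℤ, a (i + f) = a i)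
    (ha_lb : ∀ i : ℤ, 1 ≤ a i)
    (n : ℤ → ℤ)
    (hn : ∀ i : ℤ, n i = ∑ j ∈ Finset.range f, a (i + j + 1) * (p : ℤ) ^ (f - 1 - j))
    (n' t : ℤ → ℤ)
    (hn't₁ : ∀ i : ℤ, a (i - 1) ≠ p → n' i = n (i - 1) ∧ t i = i - 1)
    (hn't₂ : ∀ i : ℤ, a (i - 1) = p → ∃ j : ℤ, j < i ∧ a (j - 1) ≠ p - 1 ∧
      (∀ k : ℤ, j < k → k < i → a (k - 1) = p - 1) ∧
      n' i = n (j - 1) - ((p : ℤ) ^ f - 1) ∧ t i = j - 1) :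
    ∀ i : ℤ, 0 < n' i := by
  have hn_pred : ∀ i, n (i - 1) = ∑ k ∈ range f, a (i + k) * (p : ℤ) ^ (f - 1 - k) :=
    fun i => by rw [hn]; exact sum_congr rfl fun k _ => by ring_nf
  intro i
  rcases eq_or_ne (a (i - 1)) p with hcarry | hcarry
  · obtain ⟨j, hji, -, hrun, hn'i, -⟩ := hn't₂ i hcarry
    have hper : Function.Periodic a f := ha_per
    have hwindow : i - 1 - f < j :=
      hper.sub_lt_of_forall_eq (c := (p : ℤ) - 1) (by omega) (by omega)
        fun m hjm hmi => by simpa using hrun (m + 1) (by omega) (by omega)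
    have hvalue : (p : ℤ) ^ f ≤ n (j - 1) := by
      rw [hn_pred]
      refine pow_le_sum_mul_pow_of_carry (by positivity) (fun k => by linarith [ha_lb (j + k)])
        (k₀ := (i - 1 - j).toNat) (by omega) (fun k hk => ?_) ?_
      · simpa using hrun (j + k + 1) (by omega) (by omega)
      · rwa [Int.toNat_of_nonneg (by omega), add_sub_cancel]
    linarith
  · rw [(hn't₁ i hcarry).1, hn_pred]
    have hp_pos : (0 : ℤ) < p := by exact_mod_cast hp.pos
    exact sum_pos (fun k _ => mul_pos (by linarith [ha_lb (i + k)]) (pow_pos hp_pos _))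
      (nonempty_range_iff.mpr (by omega))

/-- For every integer `i` one has `n'_i > 0`. Here `n'` and `t` are characterized by: if `a (i-1) ≠ p` then
`n' i = n (i-1)` and `t i = i - 1`; if `a (i-1) = p` then, `j` being the greatest
integer less than `i` with `a (j-1) ≠ p - 1`, we have `n' i = n (j-1) - (p^f - 1)`
and `t i = j - 1`. -/
theorem stmt_10 (p f : ℕ) (hp : p.Prime) (hf : 1 ≤ f)
    (a : ℤ → ℤ) (ha_per : ∀ i : ℤ, a (i + f) = a i)
    (ha_lb : ∀ i : ℤ, 1 ≤ a i) (ha_ub : ∀ i : ℤ, a i ≤ p)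
    (ha_ne : ∃ i : ℤ, a i ≠ p)
    (n : ℤ → ℤ)
    (hn : ∀ i : ℤ, n i = ∑ j ∈ Finset.range f, a (i + j + 1) * (p : ℤ) ^ (f - 1 - j))
    (n' t : ℤ → ℤ)
    (hn't₁ : ∀ i : ℤ, a (i - 1) ≠ p → n' i = n (i - 1) ∧ t i = i - 1)
    (hn't₂ : ∀ i : ℤ, a (i - 1) = p → ∃ j : ℤ, j < i ∧ a (j - 1) ≠ p - 1 ∧
      (∀ k : ℤ, j < k → k < i → a (k - 1) = p - 1) ∧
      n' i = n (j - 1) - ((p : ℤ) ^ f - 1) ∧ t i = j - 1) :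
    ∀ i : ℤ, 0 < n' i :=
  stmt_10_general p f hp hf a ha_per ha_lb n hn n' t hn't₁ hn't₂
end

section
/- Suppose i ∈ J, and that for some integer s > i the following hold: none of i+1, …, s lies in J; a_i = a_{i+1} = … = a_{s−2} = p−1 (a vacuous condition if s = i+1); and a_{s−1} = p. Then ξ_i < p · n_{i−1}; in particular ξ_i ≠ p · n_{i−1}. -/
/-!
Write `t = s - i`; periodicity of `a` forces `t ≤ f`. In `p n_{i-1} = ∑_{j<f} a_{i+j} p^{f-j}`
the first `t` digits `p-1, …, p-1, p` carry to exactly `p^{f+1}`, and each later term is at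
least `p^{f-j}`. In `ξ_i` the first `t` terms are negative since `i+1, …, s ∉ J`, each later
term is at most `p · p^{f-1-j} = p^{f-j}`, and `r_i (p^f - 1) ≤ p^{f+1} - p < p^{f+1}`.
-/

open Finset

lemma sub_le_of_periodic_of_run {a : ℤ → ℤ} {f : ℕ} (hf : 1 ≤ f) (ha : ∀ k, a (k + f) = a k)
    {i s c : ℤ} (hrun : ∀ k, i ≤ k → k ≤ s - 2 → a k = c) (hs : a (s - 1) ≠ c) :
    s - i ≤ f := by
  by_contra! h
  apply hs
  rw [← hrun (s - 1 - f) (by omega) (by omega), ← ha (s - 1 - f), sub_add_cancel]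

lemma sum_range_sub_one_mul_pow {R : Type*} [CommRing R] (x : R) {f u : ℕ} (hu : u ≤ f + 1) :
    ∑ j ∈ range u, (x - 1) * x ^ (f - j) = x ^ (f + 1) - x ^ (f + 1 - u) := by
  induction u with
  | zero => simp
  | succ k ih =>
    rw [sum_range_succ, ih (by omega), show f + 1 - k = f - k + 1 by omega,
      show f + 1 - (k + 1) = f - k by omega, pow_succ]
    ring

lemma mul_sum_range_mul_pow {R : Type*} [CommRing R] (x : R) (c : ℕ → R) (f : ℕ) :
    x * ∑ j ∈ range f, c j * x ^ (f - 1 - j) = ∑ j ∈ range f, c j * x ^ (f - j) := by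
  rw [mul_sum]
  refine sum_congr rfl fun j hj => ?_
  rw [show f - j = f - 1 - j + 1 by have := mem_range.mp hj; omega, pow_succ]
  ring

lemma sum_range_succ_mul_pow_eq_of_carry {R : Type*} [CommRing R] {c : ℕ → R} {x : R} {u f : ℕ}
    (hu : u ≤ f) (hrun : ∀ j < u, c j = x - 1) (hlast : c u = x) :
    ∑ j ∈ range (u + 1), c j * x ^ (f - j) = x ^ (f + 1) := by
  rw [sum_range_succ, sum_congr rfl fun j hj => by rw [hrun j (mem_range.mp hj)],
    sum_range_sub_one_mul_pow x (by omega), hlast, ← pow_succ',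
    show f - u + 1 = f + 1 - u by omega]
  ring

lemma pow_succ_add_sum_Ico_le_of_carry {c : ℕ → ℤ} {x : ℤ} {u f : ℕ} (hu : u < f)
    (hc : ∀ j, 1 ≤ c j) (hrun : ∀ j < u, c j = x - 1) (hlast : c u = x) :
    x ^ (f + 1) + ∑ j ∈ Ico (u + 1) f, x ^ (f - j) ≤ ∑ j ∈ range f, c j * x ^ (f - j) := by
  have hx : 0 ≤ x := hlast ▸ zero_le_one.trans (hc u)
  rw [← sum_range_add_sum_Ico _ hu, sum_range_succ_mul_pow_eq_of_carry hu.le hrun hlast]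
  gcongr with j
  exact le_mul_of_one_le_left (by positivity) (hc j)

lemma sum_mul_mul_pow_le_sum_Ico {ε r : ℕ → ℤ} {x : ℤ} {t f : ℕ} (htf : t ≤ f)
    (hr₀ : ∀ j, 0 ≤ r j) (hrx : ∀ j, r j ≤ x) (hε : ∀ j, ε j ≤ 1) (hεt : ∀ j < t, ε j ≤ 0) :
    ∑ j ∈ range f, ε j * r j * x ^ (f - 1 - j) ≤ ∑ j ∈ Ico t f, x ^ (f - j) := by
  have hx : 0 ≤ x := (hr₀ 0).trans (hrx 0)
  rw [← sum_range_add_sum_Ico _ htf]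
  refine add_le_of_nonpos_of_le (sum_nonpos fun j hj => ?_) (sum_le_sum fun j hj => ?_)
  · exact mul_nonpos_of_nonpos_of_nonneg
      (mul_nonpos_of_nonpos_of_nonneg (hεt j (mem_range.mp hj)) (hr₀ j)) (by positivity)
  · rw [show f - j = f - 1 - j + 1 by have := (mem_Ico.mp hj).2; omega, pow_succ']
    gcongr
    nlinarith [hε j, hr₀ j, hrx j]

lemma mul_pow_sub_one_lt_pow_succ {r x : ℤ} (hrx : r ≤ x) (hx : 0 < x) (f : ℕ) :
    r * (x ^ f - 1) < x ^ (f + 1) := by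
  have : 0 ≤ x ^ f - 1 := sub_nonneg.mpr (one_le_pow₀ hx)
  calc r * (x ^ f - 1) ≤ x * (x ^ f - 1) := by gcongr
    _ < x ^ (f + 1) := by rw [pow_succ']; linarith

open scoped Classical in
theorem stmt_11_general (p f : ℕ) (hf : 1 ≤ f)
    (r : ℤ → ℤ)
    (hr_lb : ∀ i : ℤ, 1 ≤ r i) (hr_ub : ∀ i : ℤ, r i ≤ p)
    (J : Set ℤ)
    (xi : ℤ → ℤ)
    (hxi : ∀ i : ℤ, xi i =
      (∑ j ∈ Finset.range f,
        (if (i + j + 1 : ℤ) ∈ J then (1 : ℤ) else -1) * r (i + j + 1) * (p : ℤ) ^ (f - 1 - j))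
      + (if i ∈ J then r i * ((p : ℤ) ^ f - 1) else 0))
    (a : ℤ → ℤ) (ha_per : ∀ i : ℤ, a (i + f) = a i)
    (ha_lb : ∀ i : ℤ, 1 ≤ a i)
    (n : ℤ → ℤ)
    (hn : ∀ i : ℤ, n i = ∑ j ∈ Finset.range f, a (i + j + 1) * (p : ℤ) ^ (f - 1 - j))
    (i s : ℤ) (hi : i ∈ J) (his : i < s)
    (hsJ : ∀ k : ℤ, i < k → k ≤ s → k ∉ J)
    (ha₁ : ∀ k : ℤ, i ≤ k → k ≤ s - 2 → a k = p - 1)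
    (ha₂ : a (s - 1) = p) :
    xi i < (p : ℤ) * n (i - 1) ∧ xi i ≠ (p : ℤ) * n (i - 1) := by
  have hp : (0 : ℤ) < p := by linarith [hr_lb i, hr_ub i]
  obtain ⟨u, rfl⟩ : ∃ u : ℕ, s = i + u + 1 := ⟨(s - i - 1).toNat, by omega⟩
  have huf : u < f := by
    have := sub_le_of_periodic_of_run hf ha_per ha₁ (by omega)
    omega
  have hxi_le : xi i ≤ ∑ j ∈ Ico (u + 1) f, (p : ℤ) ^ (f - j) + r i * ((p : ℤ) ^ f - 1) := by
    rw [hxi, if_pos hi]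
    gcongr
    refine sum_mul_mul_pow_le_sum_Ico huf (fun _ => zero_le_one.trans (hr_lb _)) (fun _ => hr_ub _)
      (fun _ => by split_ifs <;> norm_num) fun j hj => ?_
    rw [if_neg (hsJ _ (by omega) (by omega))]
    norm_num
  have hn_ge : (p : ℤ) ^ (f + 1) + ∑ j ∈ Ico (u + 1) f, (p : ℤ) ^ (f - j) ≤ p * n (i - 1) := by
    simp_rw [hn, show ∀ j : ℕ, i - 1 + j + 1 = i + j by intro; ring, mul_sum_range_mul_pow]
    exact pow_succ_add_sum_Ico_le_of_carry huf (fun _ => ha_lb _)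
      (fun j hj => ha₁ _ (by omega) (by omega)) (by rw [← ha₂]; congr 1; ring)
  have hlt : xi i < p * n (i - 1) := by
    linarith [mul_pow_sub_one_lt_pow_succ (hr_ub i) hp f]
  exact ⟨hlt, hlt.ne⟩

open scoped Classical in
/-- Suppose `i ∈ J` and for some integer `s > i` we have: none of `i+1, …, s` lies in
`J`; `a_i = a_{i+1} = ⋯ = a_{s-2} = p - 1`; and `a_{s-1} = p`. Then `ξ_i < p n_{i-1}`;
in particular `ξ_i ≠ p n_{i-1}`. -/
theorem stmt_11 (p f : ℕ) (hp : p.Prime) (hf : 1 ≤ f)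
    (r : ℤ → ℤ) (hr_per : ∀ i : ℤ, r (i + f) = r i)
    (hr_lb : ∀ i : ℤ, 1 ≤ r i) (hr_ub : ∀ i : ℤ, r i ≤ p)
    (J : Set ℤ) (hJ_per : ∀ i : ℤ, i ∈ J ↔ i + f ∈ J)
    (xi : ℤ → ℤ)
    (hxi : ∀ i : ℤ, xi i =
      (∑ j ∈ Finset.range f,
        (if (i + j + 1 : ℤ) ∈ J then (1 : ℤ) else -1) * r (i + j + 1) * (p : ℤ) ^ (f - 1 - j))
      + (if i ∈ J then r i * ((p : ℤ) ^ f - 1) else 0))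
    (a : ℤ → ℤ) (ha_per : ∀ i : ℤ, a (i + f) = a i)
    (ha_lb : ∀ i : ℤ, 1 ≤ a i) (ha_ub : ∀ i : ℤ, a i ≤ p)
    (ha_ne : ∃ i : ℤ, a i ≠ p)
    (n : ℤ → ℤ)
    (hn : ∀ i : ℤ, n i = ∑ j ∈ Finset.range f, a (i + j + 1) * (p : ℤ) ^ (f - 1 - j))
    (i s : ℤ) (hi : i ∈ J) (his : i < s)
    (hsJ : ∀ k : ℤ, i < k → k ≤ s → k ∉ J)
    (ha₁ : ∀ k : ℤ, i ≤ k → k ≤ s - 2 → a k = p - 1)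
    (ha₂ : a (s - 1) = p) :
    xi i < (p : ℤ) * n (i - 1) ∧ xi i ≠ (p : ℤ) * n (i - 1) :=
  stmt_11_general p f hf r hr_lb hr_ub J xi hxi a ha_per ha_lb n hn i s hi his hsJ ha₁ ha₂
end

section
/- Suppose i ∈ J, m ≥ 1 is an integer, and j is an integer with i−m+2 ≤ j < i such that: a_{i−m} ≠ p−1; a_{i−m+1} = … = a_{j−2} = p−1 (a vacuous condition if j = i−m+2); a_{j−1} = p; and none of i−m+1, …, j lies in J. Then ξ_i ≠ p^m · (n_{i−m} − (p^f − 1)). -/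
/-!
Write `w` for the number of digits of `n_{i-m}` after the digit `a_{j-1} = p`. The digits
`p - 1, …, p - 1, p` before it add up to exactly `p ^ f`, and the remaining `w` digits are at
least `1`, so `(p - 1) (n_{i-m} - (p ^ f - 1)) ≥ p ^ w`, and the right-hand side times `p - 1`
is at least `p ^ (m + w) = p ^ (f + i - j + 1) ≥ p ^ (f + 2)`. On the other hand every digit of
`ξ_i` is at most `p`, which gives `(p - 1) ξ_i ≤ p ^ 2 (p ^ f - 1) < p ^ (f + 2)`.
-/

open Finset

-- The base-`p` numeral with digits `c 0, …, c (f - 1)`, most significant first; the digits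
-- are arbitrary integers.
def digitValue (p : ℤ) (c : ℕ → ℤ) (f : ℕ) : ℤ :=
  ∑ k ∈ range f, c k * p ^ (f - 1 - k)

namespace digitValue

variable {p : ℤ} {c : ℕ → ℤ} {f : ℕ}

theorem succ :
    digitValue p c (f + 1) = c 0 * p ^ f + digitValue p (fun k => c (k + 1)) f := by
  rw [digitValue, sum_range_succ', add_comm]
  congr 1
  refine sum_congr rfl fun k _ => ?_
  congr 2
  omega

theorem const_mul_sub_one (B : ℤ) :
    digitValue p (fun _ => B) f * (p - 1) = B * (p ^ f - 1) := by
  induction f with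
  | zero => simp [digitValue]
  | succ f ih => rw [succ, add_mul, ih]; ring

theorem mono {c' : ℕ → ℤ} (hp : 0 ≤ p) (h : ∀ k < f, c k ≤ c' k) :
    digitValue p c f ≤ digitValue p c' f :=
  sum_le_sum fun k hk => by gcongr; exact h k (mem_range.mp hk)

theorem mul_sub_one_le {B : ℤ} (hp : 1 ≤ p) (hc : ∀ k < f, c k ≤ B) :
    digitValue p c f * (p - 1) ≤ B * (p ^ f - 1) := by
  rw [← const_mul_sub_one]
  exact mul_le_mul_of_nonneg_right (mono (by omega) hc) (by omega)

theorem le_mul_sub_one {B : ℤ} (hp : 1 ≤ p) (hc : ∀ k < f, B ≤ c k) :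
    B * (p ^ f - 1) ≤ digitValue p c f * (p - 1) := by
  rw [← const_mul_sub_one]
  exact mul_le_mul_of_nonneg_right (mono (by omega) hc) (by omega)

-- The leading digits `p - 1, …, p - 1, p` add up to exactly `p ^ f`.
theorem add_le_of_carry {L : ℕ} (hp : 1 ≤ p) (hLf : L < f) (hc : ∀ k < f, 1 ≤ c k)
    (hlow : ∀ k < L, c k = p - 1) (hL : c L = p) :
    p ^ (f - 1 - L) + (p - 2) ≤ (digitValue p c f - (p ^ f - 1)) * (p - 1) := by
  induction L generalizing c f with
  | zero =>
    obtain ⟨f, rfl⟩ : ∃ g, f = g + 1 := ⟨f - 1, by omega⟩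
    have htail := le_mul_sub_one (c := fun k => c (k + 1)) (B := 1) (f := f) hp
      fun k hk => hc (k + 1) (by omega)
    rw [succ, hL, Nat.sub_zero, Nat.add_sub_cancel,
      show p * p ^ f + digitValue p _ f - (p ^ (f + 1) - 1) = digitValue p _ f + 1 by ring]
    linarith
  | succ L ih =>
    obtain ⟨f, rfl⟩ : ∃ g, f = g + 1 := ⟨f - 1, by omega⟩
    have htail := ih (c := fun k => c (k + 1)) (f := f) (by omega)
      (fun k hk => hc (k + 1) (by omega)) (fun k hk => hlow (k + 1) (by omega)) hL
    rw [succ, hlow 0 (by omega), show f + 1 - 1 - (L + 1) = f - 1 - L by omega]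
    convert htail using 2
    ring

end digitValue

theorem sign_mul_le_s12 {J : Set ℤ} [DecidablePred (· ∈ J)] {r : ℤ → ℤ} {p : ℤ}
    (hr_lb : ∀ i, 1 ≤ r i) (hr_ub : ∀ i, r i ≤ p) (s : ℤ) :
    (if s ∈ J then 1 else -1) * r s ≤ p := by
  have := hr_lb s
  have := hr_ub s
  split_ifs <;> omega

open scoped Classical in
theorem stmt_12_general (p f : ℕ) (hp : p.Prime) (hf : 1 ≤ f)
    (r : ℤ → ℤ)
    (hr_lb : ∀ i : ℤ, 1 ≤ r i) (hr_ub : ∀ i : ℤ, r i ≤ p)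
    (J : Set ℤ)
    (xi : ℤ → ℤ)
    (hxi : ∀ i : ℤ, xi i =
      (∑ j ∈ Finset.range f,
        (if (i + j + 1 : ℤ) ∈ J then (1 : ℤ) else -1) * r (i + j + 1) * (p : ℤ) ^ (f - 1 - j))
      + (if i ∈ J then r i * ((p : ℤ) ^ f - 1) else 0))
    (a : ℤ → ℤ) (ha_per : ∀ i : ℤ, a (i + f) = a i)
    (ha_lb : ∀ i : ℤ, 1 ≤ a i)
    (n : ℤ → ℤ)
    (hn : ∀ i : ℤ, n i = ∑ j ∈ Finset.range f, a (i + j + 1) * (p : ℤ) ^ (f - 1 - j))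
    (i : ℤ) (m : ℕ) (j : ℤ)
    (hj₁ : i - m + 2 ≤ j) (hj₂ : j < i)
    (ha₂ : ∀ k : ℤ, i - m + 1 ≤ k → k ≤ j - 2 → a k = p - 1)
    (ha₃ : a (j - 1) = p) :
    xi i ≠ (p : ℤ) ^ m * (n (i - m) - ((p : ℤ) ^ f - 1)) := by
  have hp2 : (2 : ℤ) ≤ p := by exact_mod_cast hp.two_le
  obtain ⟨L, hL⟩ : ∃ L : ℕ, i - m + L + 1 = j - 1 := ⟨(j - i + m - 2).toNat, by omega⟩
  -- Otherwise `a (j - 1 - f)` would be both `p - 1` and, by periodicity, `p`.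
  have hLf : L < f := by
    by_contra! hfL
    have := ha_per (j - 1 - f)
    rw [sub_add_cancel, ha₃, ha₂ _ (by omega) (by omega)] at this
    omega
  have hxi_le : xi i * (p - 1) ≤ p ^ 2 * (p ^ f - 1) := by
    have hdigits := digitValue.mul_sub_one_le (p := p) (B := p) (f := f) (by omega)
      (c := fun k => (if i + k + 1 ∈ J then 1 else -1) * r (i + k + 1))
      fun k _ => sign_mul_le_s12 hr_lb hr_ub _
    have hlead : (if i ∈ J then r i * (p ^ f - 1) else 0) ≤ p * (p ^ f - 1) := by
      have : (1 : ℤ) ≤ p ^ f := one_le_pow₀ (by omega)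
      split_ifs
      · exact mul_le_mul_of_nonneg_right (hr_ub i) (by omega)
      · exact mul_nonneg (by omega) (by omega)
    rw [hxi i]
    change (digitValue p _ f + _) * (p - 1) ≤ _
    linarith [mul_le_mul_of_nonneg_right hlead (by omega : (0 : ℤ) ≤ p - 1)]
  have hn_ge := digitValue.add_le_of_carry (c := fun k => a (i - m + k + 1)) (by omega) hLf
    (fun k _ => ha_lb _) (fun k hk => ha₂ _ (by omega) (by omega)) (by rw [hL, ha₃])
  rw [digitValue, ← hn] at hn_ge
  intro heq
  have := calc
    (p : ℤ) ^ 2 * p ^ f ≤ p ^ m * p ^ (f - 1 - L) := by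
      rw [← pow_add, ← pow_add]; exact pow_le_pow_right₀ (by omega) (by omega)
    _ ≤ p ^ m * (p ^ (f - 1 - L) + (p - 2)) := by gcongr; omega
    _ ≤ p ^ m * ((n (i - m) - (p ^ f - 1)) * (p - 1)) := by gcongr
    _ = xi i * (p - 1) := by rw [heq]; ring
  linarith [pow_pos (by omega : (0 : ℤ) < p) 2]

open scoped Classical in
/-- Suppose `i ∈ J`, `m ≥ 1`, and `j` is an integer with `i - m + 2 ≤ j < i` such
that `a_{i-m} ≠ p - 1`, `a_{i-m+1} = ⋯ = a_{j-2} = p - 1`, `a_{j-1} = p`, and none of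
`i-m+1, …, j` lies in `J`. Then `ξ_i ≠ p^m (n_{i-m} - (p^f - 1))`. -/
theorem stmt_12 (p f : ℕ) (hp : p.Prime) (hf : 1 ≤ f)
    (r : ℤ → ℤ) (hr_per : ∀ i : ℤ, r (i + f) = r i)
    (hr_lb : ∀ i : ℤ, 1 ≤ r i) (hr_ub : ∀ i : ℤ, r i ≤ p)
    (J : Set ℤ) (hJ_per : ∀ i : ℤ, i ∈ J ↔ i + f ∈ J)
    (xi : ℤ → ℤ)
    (hxi : ∀ i : ℤ, xi i =
      (∑ j ∈ Finset.range f,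
        (if (i + j + 1 : ℤ) ∈ J then (1 : ℤ) else -1) * r (i + j + 1) * (p : ℤ) ^ (f - 1 - j))
      + (if i ∈ J then r i * ((p : ℤ) ^ f - 1) else 0))
    (hmax₁ : ∀ i j : ℤ, j < i → r j = 1 → (∀ k : ℤ, j < k → k < i → r k = p - 1) →
      r i = p → (∀ k : ℤ, j < k → k ≤ i → k ∉ J) → j ∉ J)
    (hmax₂ : ((∀ i : ℤ, r i = p - 1) ∨ (p = 2 ∧ ∀ i : ℤ, r i = 2)) → J.Nonempty)
    (hJ_ne_univ : (∀ i : ℤ, r i = p) → J ≠ Set.univ)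
    (a : ℤ → ℤ) (ha_per : ∀ i : ℤ, a (i + f) = a i)
    (ha_lb : ∀ i : ℤ, 1 ≤ a i) (ha_ub : ∀ i : ℤ, a i ≤ p)
    (ha_ne : ∃ i : ℤ, a i ≠ p)
    (n : ℤ → ℤ)
    (hn : ∀ i : ℤ, n i = ∑ j ∈ Finset.range f, a (i + j + 1) * (p : ℤ) ^ (f - 1 - j))
    (i : ℤ) (hi : i ∈ J) (m : ℕ) (hm : 1 ≤ m) (j : ℤ)
    (hj₁ : i - m + 2 ≤ j) (hj₂ : j < i)
    (ha₁ : a (i - m) ≠ p - 1)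
    (ha₂ : ∀ k : ℤ, i - m + 1 ≤ k → k ≤ j - 2 → a k = p - 1)
    (ha₃ : a (j - 1) = p)
    (hJm : ∀ k : ℤ, i - m + 1 ≤ k → k ≤ j → k ∉ J) :
    xi i ≠ (p : ℤ) ^ m * (n (i - m) - ((p : ℤ) ^ f - 1)) :=
  stmt_12_general p f hp hf r hr_lb hr_ub J xi hxi a ha_per ha_lb n hn i m j hj₁ hj₂ ha₂ ha₃
end

section
/- Suppose J consists exactly of the residue class of i modulo f, i.e. J = {i + kf : k ∈ ℤ}, and r_i = 1. Then ξ_i ≥ p. -/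
/-!
Since `J = i + fℤ`, every index strictly between `i` and `i + f` lies outside `J`, while `i + f` lies
in `J` with `r (i + f) = r i = 1`. Writing `f = n + 1`, this gives
`ξ_i = p ^ (n + 1) - ∑_{j < n} r (i + j + 1) p ^ (n - j)`. The sum is read as a base-`p` expansion
with digits at most `p`; maximality of `J`, applied at `i`, forbids the digit string from starting
with `p - 1, …, p - 1, p`, and a lexicographic comparison with the all-`(p - 1)` string then bounds
the sum by `p ^ (n + 1) - p`.
-/

lemma sum_mul_pow_sub_le_two_mul {p : ℤ} (hp : 2 ≤ p) :
    ∀ (n : ℕ) (a : ℕ → ℤ), (∀ j, a j ≤ p) →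
      ∑ j ∈ Finset.range n, a j * p ^ (n - j) ≤ 2 * (p ^ (n + 1) - p)
  | 0, _, _ => by simp
  | n + 1, a, ha => by
    have htail := sum_mul_pow_sub_le_two_mul hp n (fun j => a (j + 1)) (fun j => ha _)
    have hpow : 0 ≤ p ^ (n + 1) := pow_nonneg (by linarith) _
    have hhead : a 0 * p ^ (n + 1) ≤ p * p ^ (n + 1) := mul_le_mul_of_nonneg_right (ha 0) hpow
    have htwo : 2 * p ^ (n + 1) ≤ p * p ^ (n + 1) := mul_le_mul_of_nonneg_right hp hpow
    have hpow_succ : p ^ (n + 1 + 1) = p * p ^ (n + 1) := pow_succ' p (n + 1)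
    rw [Finset.sum_range_succ']
    simp only [Nat.add_sub_add_right, Nat.sub_zero] at htail ⊢
    linarith

lemma sum_mul_pow_sub_le_of_prefix {p : ℤ} (hp : 2 ≤ p) :
    ∀ (n : ℕ) (a : ℕ → ℤ), (∀ j, a j ≤ p) →
      (∀ t < n, (∀ j < t, a j = p - 1) → a t ≤ p - 1) →
      ∑ j ∈ Finset.range n, a j * p ^ (n - j) ≤ p ^ (n + 1) - p
  | 0, _, _, _ => by simp
  | n + 1, a, ha, hprefix => by
    have hpow : 0 ≤ p ^ (n + 1) := pow_nonneg (by linarith) _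
    have hpow_succ : p ^ (n + 1 + 1) = p * p ^ (n + 1) := pow_succ' p (n + 1)
    rw [Finset.sum_range_succ']
    simp only [Nat.add_sub_add_right, Nat.sub_zero]
    have ha0 : a 0 ≤ p - 1 := hprefix 0 n.succ_pos (fun j hj => absurd hj j.not_lt_zero)
    rcases ha0.eq_or_lt with ha0 | ha0
    · have htail := sum_mul_pow_sub_le_of_prefix hp n (fun j => a (j + 1)) (fun j => ha _)
        fun t ht hprev => hprefix (t + 1) (by omega) fun
          | 0, _ => ha0
          | j + 1, hj => hprev j (by omega)
      rw [ha0]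
      linarith
    · have htail := sum_mul_pow_sub_le_two_mul hp n (fun j => a (j + 1)) (fun j => ha _)
      have hhead : a 0 * p ^ (n + 1) ≤ (p - 2) * p ^ (n + 1) :=
        mul_le_mul_of_nonneg_right (by omega) hpow
      linarith

lemma ne_add_mul_of_lt_of_lt {i f k : ℤ} (h₁ : i < k) (h₂ : k < i + f) (m : ℤ) :
    k ≠ i + m * f := by
  rintro rfl
  rcases le_or_gt m 0 with hm | hm <;> nlinarith

lemma le_sub_one_of_maximal {p : ℤ} {r : ℤ → ℤ} {J : Set ℤ}
    (hmax : ∀ i j : ℤ, j < i → r j = 1 → (∀ k : ℤ, j < k → k < i → r k = p - 1) →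
      r i = p → (∀ k : ℤ, j < k → k ≤ i → k ∉ J) → j ∉ J)
    (hr_ub : ∀ k, r k ≤ p) {i : ℤ} (hi : i ∈ J) (hri : r i = 1) {t : ℕ}
    (hgap : ∀ k, i < k → k ≤ i + t + 1 → k ∉ J)
    (hprefix : ∀ j < t, r (i + j + 1) = p - 1) :
    r (i + t + 1) ≤ p - 1 := by
  by_contra! hlt
  have hrt : r (i + t + 1) = p := le_antisymm (hr_ub _) (by omega)
  refine hmax (i + t + 1) i (by omega) hri (fun k hk₁ hk₂ => ?_) hrt hgap hi
  obtain ⟨j, rfl⟩ : ∃ j : ℕ, k = i + j + 1 := ⟨(k - i - 1).toNat, by omega⟩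
  exact hprefix j (by omega)

lemma signed_sum_eq_of_gap {p : ℤ} {r : ℤ → ℤ} {J : Set ℤ} [DecidablePred (· ∈ J)] {i : ℤ}
    {n : ℕ} (hgap : ∀ j < n, i + j + 1 ∉ J) (hend : i + n + 1 ∈ J) (hr_end : r (i + n + 1) = 1) :
    ∑ j ∈ Finset.range (n + 1),
        (if i + j + 1 ∈ J then (1 : ℤ) else -1) * r (i + j + 1) * p ^ (n + 1 - 1 - j)
      = 1 - ∑ j ∈ Finset.range n, r (i + j + 1) * p ^ (n - j) := by
  rw [Finset.sum_range_succ, if_pos hend, hr_end, Nat.add_sub_cancel, Nat.sub_self, pow_zero,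
    mul_one, sub_eq_neg_add, ← Finset.sum_neg_distrib]
  congr 1
  refine Finset.sum_congr rfl fun j hj => ?_
  rw [if_neg (hgap j (Finset.mem_range.1 hj))]
  ring

open scoped Classical in
theorem stmt_13_general (p f : ℕ) (hp : p.Prime) (hf : 1 ≤ f)
    (r : ℤ → ℤ) (hr_per : ∀ i : ℤ, r (i + f) = r i)
    (hr_ub : ∀ i : ℤ, r i ≤ p)
    (J : Set ℤ)
    (xi : ℤ → ℤ)
    (hxi : ∀ i : ℤ, xi i =
      (∑ j ∈ Finset.range f,
        (if (i + j + 1 : ℤ) ∈ J then (1 : ℤ) else -1) * r (i + j + 1) * (p : ℤ) ^ (f - 1 - j))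
      + (if i ∈ J then r i * ((p : ℤ) ^ f - 1) else 0))
    (hmax₁ : ∀ i j : ℤ, j < i → r j = 1 → (∀ k : ℤ, j < k → k < i → r k = p - 1) →
      r i = p → (∀ k : ℤ, j < k → k ≤ i → k ∉ J) → j ∉ J)
    (i : ℤ) (hJi : ∀ k : ℤ, k ∈ J ↔ ∃ m : ℤ, k = i + m * f)
    (hri : r i = 1) :
    (p : ℤ) ≤ xi i := by
  obtain ⟨n, rfl⟩ : ∃ n, f = n + 1 := ⟨f - 1, by omega⟩
  have hp2 : (2 : ℤ) ≤ p := by exact_mod_cast hp.two_le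
  have hiJ : i ∈ J := (hJi i).2 ⟨0, by ring⟩
  have hgap : ∀ k, i < k → k ≤ i + n → k ∉ J := fun k hk₁ hk₂ hk => by
    obtain ⟨m, hm⟩ := (hJi k).1 hk
    exact ne_add_mul_of_lt_of_lt hk₁ (by push_cast; omega) m hm
  have hend : i + n + 1 ∈ J := (hJi _).2 ⟨1, by push_cast; ring⟩
  have hr_end : r (i + n + 1) = 1 := by simpa [add_assoc, hri] using hr_per i
  have hdigits := sum_mul_pow_sub_le_of_prefix hp2 n (fun j => r (i + j + 1)) (fun j => hr_ub _)
    fun t ht hprefix => le_sub_one_of_maximal hmax₁ hr_ub hiJ hri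
      (fun k hk₁ hk₂ => hgap k hk₁ (by omega)) hprefix
  rw [hxi, signed_sum_eq_of_gap (fun j hj => hgap _ (by omega) (by omega)) hend hr_end,
    if_pos hiJ, hri]
  linarith

open scoped Classical in
/-- Suppose `J` is exactly the residue class of `i` modulo `f`, i.e.
`J = {i + k f : k ∈ ℤ}`, and `r_i = 1`. Then `ξ_i ≥ p`. -/
theorem stmt_13 (p f : ℕ) (hp : p.Prime) (hf : 1 ≤ f)
    (r : ℤ → ℤ) (hr_per : ∀ i : ℤ, r (i + f) = r i)
    (hr_lb : ∀ i : ℤ, 1 ≤ r i) (hr_ub : ∀ i : ℤ, r i ≤ p)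
    (J : Set ℤ) (hJ_per : ∀ i : ℤ, i ∈ J ↔ i + f ∈ J)
    (xi : ℤ → ℤ)
    (hxi : ∀ i : ℤ, xi i =
      (∑ j ∈ Finset.range f,
        (if (i + j + 1 : ℤ) ∈ J then (1 : ℤ) else -1) * r (i + j + 1) * (p : ℤ) ^ (f - 1 - j))
      + (if i ∈ J then r i * ((p : ℤ) ^ f - 1) else 0))
    (hmax₁ : ∀ i j : ℤ, j < i → r j = 1 → (∀ k : ℤ, j < k → k < i → r k = p - 1) →
      r i = p → (∀ k : ℤ, j < k → k ≤ i → k ∉ J) → j ∉ J)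
    (hmax₂ : ((∀ i : ℤ, r i = p - 1) ∨ (p = 2 ∧ ∀ i : ℤ, r i = 2)) → J.Nonempty)
    (hJ_ne_univ : (∀ i : ℤ, r i = p) → J ≠ Set.univ)
    (i : ℤ) (hJi : ∀ k : ℤ, k ∈ J ↔ ∃ m : ℤ, k = i + m * f)
    (hri : r i = 1) :
    (p : ℤ) ≤ xi i :=
  stmt_13_general p f hp hf r hr_per hr_ub J xi hxi hmax₁ i hJi hri
end
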